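/- arXiv:2206.08340 — 4 statements merged into one kernel-verified Lean document; each statement's English description precedes it below -/
import Mathlib

section
/- Let n ≥ 1, let 0 < β < 1, 0 < α < n with α + β < n, and let 1 < p < n/(α+β) and 1/q = 1/p − (α+β)/n. Suppose b : ℝⁿ → ℝ is locally integrable and there is a constant A such that ‖M_{α,b} f‖_{L^q(ℝⁿ)} ≤ A ‖f‖_{L^p(ℝⁿ)} for every f ∈ L^p(ℝⁿ). Then there is a constant C such that for every ball B ⊂ ℝⁿ, (|B|⁻¹ ∫_B |b(x) − b_B|^q dx)^{1/q} ≤ C |B|^{β/n}. -/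
open MeasureTheory Metric Set
open scoped ENNReal NNReal

/-- The fractional maximal function `M_α f` on `ℝⁿ`:
`M_α f (x) = sup_{B ∋ x} |B|^{α/n - 1} ∫_B |f|`. -/
noncomputable def fracMax (n : ℕ) (α : ℝ) (f : EuclideanSpace ℝ (Fin n) → ℝ)
    (x : EuclideanSpace ℝ (Fin n)) : ℝ≥0∞ :=
  ⨆ (c : EuclideanSpace ℝ (Fin n)) (r : ℝ) (_ : 0 < r) (_ : x ∈ ball c r),
    volume (ball c r) ^ (α / n - 1) * ∫⁻ y in ball c r, (‖f y‖₊ : ℝ≥0∞)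

/-- The fractional maximal commutator `M_{α,b} f`:
`M_{α,b} f (x) = sup_{B ∋ x} |B|^{α/n - 1} ∫_B |b(x) - b(y)| |f(y)| dy`. -/
noncomputable def fracMaxComm (n : ℕ) (α : ℝ) (b f : EuclideanSpace ℝ (Fin n) → ℝ)
    (x : EuclideanSpace ℝ (Fin n)) : ℝ≥0∞ :=
  ⨆ (c : EuclideanSpace ℝ (Fin n)) (r : ℝ) (_ : 0 < r) (_ : x ∈ ball c r),
    volume (ball c r) ^ (α / n - 1) *
      ∫⁻ y in ball c r, (‖b x - b y‖₊ : ℝ≥0∞) * (‖f y‖₊ : ℝ≥0∞)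

/-- The local fractional maximal function `M_{α,B₀} f`, supremum over balls `B` with
`x ∈ B ⊆ B₀`. For `α = 0` this is the local Hardy–Littlewood maximal function `M_{B₀}`. -/
noncomputable def fracMaxLocal (n : ℕ) (α : ℝ) (B₀ : Set (EuclideanSpace ℝ (Fin n)))
    (f : EuclideanSpace ℝ (Fin n) → ℝ) (x : EuclideanSpace ℝ (Fin n)) : ℝ≥0∞ :=
  ⨆ (c : EuclideanSpace ℝ (Fin n)) (r : ℝ) (_ : 0 < r) (_ : x ∈ ball c r)
    (_ : ball c r ⊆ B₀),
    volume (ball c r) ^ (α / n - 1) * ∫⁻ y in ball c r, (‖f y‖₊ : ℝ≥0∞)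

/-- The average `b_B = |B|⁻¹ ∫_B b` of `b` over the ball `B = ball c r`. -/
noncomputable def ballAvg (n : ℕ) (b : EuclideanSpace ℝ (Fin n) → ℝ)
    (c : EuclideanSpace ℝ (Fin n)) (r : ℝ) : ℝ :=
  (volume (ball c r)).toReal⁻¹ * ∫ y in ball c r, b y

/-!
Test the boundedness of `M_{α,b}` on `f = 𝟙_B`. For `x ∈ B`,
`M_{α,b} 𝟙_B (x) ≥ |B|^{α/n - 1} ∫_B |b(x) - b(y)| dy ≥ |B|^{α/n} |b(x) - b_B|`,
so `|B|^{α/n} ‖b - b_B‖_{L^q(B)} ≤ A ‖𝟙_B‖_p = A |B|^{1/p}`. Normalising the measure on `B`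
costs a factor `|B|^{-1/q}`, and `1/p - α/n - 1/q = β/n`.
-/

theorem ENNReal.inv_rpow_mul_le_of_rpow_mul_le {V X Y : ℝ≥0∞} {a c d : ℝ} (h0 : V ≠ 0)
    (hT : V ≠ ∞) (h : V ^ a * X ≤ Y * V ^ c) : V⁻¹ ^ d * X ≤ Y * V ^ (c - a - d) :=
  calc V⁻¹ ^ d * X = V ^ (-a - d) * (V ^ a * X) := by
        rw [ENNReal.inv_rpow, ← ENNReal.rpow_neg, ← mul_assoc, ← ENNReal.rpow_add _ _ h0 hT]
        ring_nf
    _ ≤ V ^ (-a - d) * (Y * V ^ c) := by gcongr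
    _ = Y * V ^ (c - a - d) := by
        rw [mul_left_comm, ← ENNReal.rpow_add _ _ h0 hT]
        ring_nf

namespace MeasureTheory

variable {X E : Type*} {m : MeasurableSpace X} {μ : Measure X} {s : Set X}
  [NormedAddCommGroup E] [NormedSpace ℝ E] [CompleteSpace E]

theorem enorm_sub_setAverage_mul_measure_le {f : X → E} (hs : μ s ≠ ∞)
    (hf : IntegrableOn f s μ) (c : E) :
    ‖c - ⨍ x in s, f x ∂μ‖ₑ * μ s ≤ ∫⁻ x in s, ‖c - f x‖ₑ ∂μ := by
  have hint : ∫ x in s, (c - f x) ∂μ = μ.real s • (c - ⨍ x in s, f x ∂μ) := by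
    rw [integral_sub (integrableOn_const (C := c) hs) hf, setIntegral_const,
      ← measure_smul_setAverage _ hs, smul_sub]
  calc ‖c - ⨍ x in s, f x ∂μ‖ₑ * μ s = ‖∫ x in s, (c - f x) ∂μ‖ₑ := by
        rw [hint, enorm_smul, Real.enorm_of_nonneg measureReal_nonneg, ofReal_measureReal hs,
          mul_comm]
    _ ≤ ∫⁻ x in s, ‖c - f x‖ₑ ∂μ := enorm_integral_le_lintegral_enorm _

theorem mul_eLpNorm'_le_of_ae_mul_enorm_le {ε ε' : Type*} [ENorm ε] [ENorm ε'] {f : X → ε}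
    {g : X → ε'} {c : ℝ≥0∞} {q : ℝ} (hq : 0 < q) (h : ∀ᵐ x ∂μ, c * ‖f x‖ₑ ≤ ‖g x‖ₑ) :
    c * eLpNorm' f q μ ≤ eLpNorm' g q μ := by
  simp only [eLpNorm'_eq_lintegral_enorm]
  calc c * (∫⁻ x, ‖f x‖ₑ ^ q ∂μ) ^ (1 / q)
      = (c ^ q * ∫⁻ x, ‖f x‖ₑ ^ q ∂μ) ^ (1 / q) := by
        rw [ENNReal.mul_rpow_of_nonneg _ _ (by positivity), one_div,
          ENNReal.rpow_rpow_inv hq.ne']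
    _ ≤ (∫⁻ x, (c * ‖f x‖ₑ) ^ q ∂μ) ^ (1 / q) := by
        gcongr
        simp only [ENNReal.mul_rpow_of_nonneg _ _ hq.le]
        exact lintegral_const_mul_le _ _
    _ ≤ (∫⁻ x, ‖g x‖ₑ ^ q ∂μ) ^ (1 / q) := by
        gcongr ?_ ^ _
        exact lintegral_mono_ae (h.mono fun x hx => by gcongr)

theorem toReal_eLpNorm'_eq_integral_abs_rpow {g : X → ℝ} (hg : AEStronglyMeasurable g μ) {q : ℝ}
    (hq : 0 < q) : (eLpNorm' g q μ).toReal = (∫ x, |g x| ^ q ∂μ) ^ (1 / q) := by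
  have hq' : ENNReal.ofReal q ≠ 0 := by simpa using hq
  have hLp : eLpNorm' g q μ = eLpNorm g (ENNReal.ofReal q) μ := by
    rw [eLpNorm_eq_eLpNorm' hq' ENNReal.ofReal_ne_top, ENNReal.toReal_ofReal hq.le]
  rw [hLp, toReal_eLpNorm hg, lpNorm_eq_integral_norm_rpow_toReal hq' ENNReal.ofReal_ne_top hg,
    ENNReal.toReal_ofReal hq.le, one_div]
  simp only [Real.norm_eq_abs]

theorem rpow_inv_measure_mul_setIntegral_abs_rpow {g : X → ℝ}
    (hg : AEStronglyMeasurable g (μ.restrict s)) {q : ℝ} (hq : 0 < q) :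
    ((μ s).toReal⁻¹ * ∫ x in s, |g x| ^ q ∂μ) ^ (1 / q) =
      (eLpNorm' g q ((μ s)⁻¹ • μ.restrict s)).toReal := by
  rw [← ENNReal.toReal_inv, ← smul_eq_mul, ← integral_smul_measure,
    toReal_eLpNorm'_eq_integral_abs_rpow (hg.smul_measure _) hq]

end MeasureTheory

section FracMaxComm

variable {n : ℕ} {α : ℝ} {b : EuclideanSpace ℝ (Fin n) → ℝ} {c x : EuclideanSpace ℝ (Fin n)}
  {r : ℝ}

theorem ballAvg_eq_setAverage (n : ℕ) (b : EuclideanSpace ℝ (Fin n) → ℝ)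
    (c : EuclideanSpace ℝ (Fin n)) (r : ℝ) : ballAvg n b c r = ⨍ y in ball c r, b y := by
  rw [ballAvg, setAverage_eq, smul_eq_mul, measureReal_def]

theorem le_fracMaxComm (f : EuclideanSpace ℝ (Fin n) → ℝ) (hr : 0 < r) (hx : x ∈ ball c r) :
    volume (ball c r) ^ (α / n - 1) *
      ∫⁻ y in ball c r, (‖b x - b y‖₊ : ℝ≥0∞) * (‖f y‖₊ : ℝ≥0∞) ≤ fracMaxComm n α b f x :=
  le_iSup₂_of_le c r (le_iSup₂_of_le hr hx le_rfl)

theorem rpow_mul_enorm_sub_ballAvg_le_fracMaxComm (hr : 0 < r) (hb : IntegrableOn b (ball c r))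
    (hx : x ∈ ball c r) :
    volume (ball c r) ^ (α / n) * ‖b x - ballAvg n b c r‖ₑ ≤
      fracMaxComm n α b ((ball c r).indicator fun _ => 1) x := by
  set V := volume (ball c r)
  have hV : V ^ (α / n) = V ^ (α / n - 1) * V := by
    simpa using ENNReal.rpow_add (α / n - 1) 1 (measure_ball_pos volume c hr).ne'
      measure_ball_lt_top.ne
  have hind : ∫⁻ y in ball c r, (‖b x - b y‖₊ : ℝ≥0∞) *
      (‖(ball c r).indicator (fun _ => (1 : ℝ)) y‖₊ : ℝ≥0∞) = ∫⁻ y in ball c r, ‖b x - b y‖ₑ :=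
    setLIntegral_congr_fun measurableSet_ball fun y hy => by
      simp [indicator_of_mem hy, enorm_eq_nnnorm]
  calc V ^ (α / n) * ‖b x - ballAvg n b c r‖ₑ
      = V ^ (α / n - 1) * (‖b x - ballAvg n b c r‖ₑ * V) := by rw [hV]; ring
    _ ≤ V ^ (α / n - 1) * ∫⁻ y in ball c r, ‖b x - b y‖ₑ := by
        rw [ballAvg_eq_setAverage]
        gcongr
        exact enorm_sub_setAverage_mul_measure_le measure_ball_lt_top.ne hb _
    _ ≤ _ := hind ▸ le_fracMaxComm _ hr hx

theorem rpow_mul_eLpNorm'_sub_ballAvg_le (hr : 0 < r) (hb : IntegrableOn b (ball c r)) {q : ℝ}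
    (hq : 0 < q) :
    volume (ball c r) ^ (α / n) *
        eLpNorm' (fun x => b x - ballAvg n b c r) q (volume.restrict (ball c r)) ≤
      eLpNorm' (fracMaxComm n α b ((ball c r).indicator fun _ => 1)) q volume :=
  calc _ ≤ eLpNorm' (fracMaxComm n α b ((ball c r).indicator fun _ => 1)) q
        (volume.restrict (ball c r)) :=
        mul_eLpNorm'_le_of_ae_mul_enorm_le hq <| ae_restrict_of_forall_mem measurableSet_ball
          fun x hx => by simpa using rpow_mul_enorm_sub_ballAvg_le_fracMaxComm hr hb hx
    _ ≤ _ := eLpNorm'_mono_measure _ Measure.restrict_le_self hq.le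

theorem rpow_mul_eLpNorm'_sub_ballAvg_le_of_fracMaxComm_bounded {p q A : ℝ} (hp : 0 < p)
    (hq : 0 < q) (hr : 0 < r) (hb : IntegrableOn b (ball c r))
    (hA : ∀ f : EuclideanSpace ℝ (Fin n) → ℝ, MemLp f (ENNReal.ofReal p) volume →
      (∫⁻ x, fracMaxComm n α b f x ^ q) ^ (1 / q) ≤
        ENNReal.ofReal A * eLpNorm f (ENNReal.ofReal p) volume) :
    volume (ball c r) ^ (α / n) *
        eLpNorm' (fun x => b x - ballAvg n b c r) q (volume.restrict (ball c r)) ≤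
      ENNReal.ofReal A * volume (ball c r) ^ (1 / p) := by
  have hind := hA _ (memLp_indicator_const (s := ball c r) _ measurableSet_ball (1 : ℝ)
    (Or.inr measure_ball_lt_top.ne))
  rw [eLpNorm_indicator_const measurableSet_ball (by simpa using hp) ENNReal.ofReal_ne_top,
    ENNReal.toReal_ofReal hp.le] at hind
  refine (rpow_mul_eLpNorm'_sub_ballAvg_le hr hb hq).trans ?_
  simpa [eLpNorm'_eq_lintegral_enorm] using hind

end FracMaxComm

theorem stmt1_general (n : ℕ) (α β : ℝ)
    (p q : ℝ) (hp1 : 1 < p) (hp2 : p < n / (α + β))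
    (hq : 1 / q = 1 / p - (α + β) / n)
    (b : EuclideanSpace ℝ (Fin n) → ℝ) (hb : LocallyIntegrable b volume)
    (A : ℝ)
    (hA : ∀ f : EuclideanSpace ℝ (Fin n) → ℝ, MemLp f (ENNReal.ofReal p) volume →
      (∫⁻ x, fracMaxComm n α b f x ^ q) ^ (1 / q) ≤
        ENNReal.ofReal A * eLpNorm f (ENNReal.ofReal p) volume) :
    ∃ C : ℝ, ∀ (c : EuclideanSpace ℝ (Fin n)) (r : ℝ), 0 < r →
      ((volume (ball c r)).toReal⁻¹ *
          ∫ x in ball c r, |b x - ballAvg n b c r| ^ q) ^ (1 / q) ≤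
        C * (volume (ball c r)).toReal ^ (β / n) := by
  have hp0 : 0 < p := by linarith
  have hq0 : 0 < q := by
    have : (α + β) / n < 1 / p := by
      rw [← one_div_div]
      exact one_div_lt_one_div_of_lt hp0 hp2
    exact one_div_pos.mp (by linarith)
  have hexp : 1 / p - α / n - 1 / q = β / n := by rw [hq, add_div]; ring
  refine ⟨max A 0, fun c r hr => ?_⟩
  have hbB : IntegrableOn b (ball c r) :=
    (hb.integrableOn_isCompact (isCompact_closedBall c r)).mono_set ball_subset_closedBall
  rw [rpow_inv_measure_mul_setIntegral_abs_rpow (g := fun x => b x - ballAvg n b c r)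
    (hbB.aestronglyMeasurable.sub aestronglyMeasurable_const) hq0]
  set V := volume (ball c r)
  have hV0 : V ≠ 0 := (measure_ball_pos volume c hr).ne'
  have hVT : V ≠ ∞ := measure_ball_lt_top.ne
  calc _ ≤ (ENNReal.ofReal A * V ^ (β / n)).toReal := by
        refine ENNReal.toReal_mono
          (ENNReal.mul_ne_top ENNReal.ofReal_ne_top (ENNReal.rpow_ne_top_of_ne_zero hV0 hVT)) ?_
        rw [eLpNorm'_smul_measure hq0.le, ← hexp]
        exact ENNReal.inv_rpow_mul_le_of_rpow_mul_le hV0 hVT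
          (rpow_mul_eLpNorm'_sub_ballAvg_le_of_fracMaxComm_bounded hp0 hq0 hr hbB hA)
    _ = max A 0 * V.toReal ^ (β / n) := by
        rw [ENNReal.toReal_mul, ENNReal.toReal_ofReal', ENNReal.toReal_rpow]

/-- if `M_{α,b}` is bounded from `L^p(ℝⁿ)` to `L^q(ℝⁿ)` with
`1 < p < n/(α+β)` and `1/q = 1/p - (α+β)/n`, then
`(|B|⁻¹ ∫_B |b - b_B|^q)^{1/q} ≤ C |B|^{β/n}` for every ball `B`. -/
theorem stmt1 (n : ℕ) (hn : 1 ≤ n) (α β : ℝ) (hβ0 : 0 < β) (hβ1 : β < 1)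
    (hα0 : 0 < α) (hαn : α < n) (hαβn : α + β < n)
    (p q : ℝ) (hp1 : 1 < p) (hp2 : p < n / (α + β))
    (hq : 1 / q = 1 / p - (α + β) / n)
    (b : EuclideanSpace ℝ (Fin n) → ℝ) (hb : LocallyIntegrable b volume)
    (A : ℝ)
    (hA : ∀ f : EuclideanSpace ℝ (Fin n) → ℝ, MemLp f (ENNReal.ofReal p) volume →
      (∫⁻ x, fracMaxComm n α b f x ^ q) ^ (1 / q) ≤
        ENNReal.ofReal A * eLpNorm f (ENNReal.ofReal p) volume) :
    ∃ C : ℝ, ∀ (c : EuclideanSpace ℝ (Fin n)) (r : ℝ), 0 < r →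
      ((volume (ball c r)).toReal⁻¹ *
          ∫ x in ball c r, |b x - ballAvg n b c r| ^ q) ^ (1 / q) ≤
        C * (volume (ball c r)).toReal ^ (β / n) :=
  stmt1_general n α β p q hp1 hp2 hq b hb A hA
end

section
/- Let n ≥ 1, let 0 < β < 1, 0 < α < n with α + β < n, and let 1 < p < n/(α+β) and 1/q = 1/p − (α+β)/n. Suppose b : ℝⁿ → ℝ is locally integrable and there is a constant A such that ‖b · M_α f − M_α(b f)‖_{L^q(ℝⁿ)} ≤ A ‖f‖_{L^p(ℝⁿ)} for every f ∈ L^p(ℝⁿ). Then there is a constant C such that for every ball B ⊂ ℝⁿ, (|B|⁻¹ ∫_B | b(x) − |B|^{−α/n} M_{α,B} b(x) |^q dx)^{1/q} ≤ C |B|^{β/n}. -/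
open MeasureTheory Metric Set Filter
open scoped ENNReal NNReal Topology

namespace Stmt5Aux

noncomputable section

variable {n : ℕ}

local notation "Euc" => EuclideanSpace ℝ (Fin n)

/-- antitonicity of ENNReal rpow in the base, for nonpositive exponents -/
lemma rpow_anti {a b : ℝ≥0∞} (hab : a ≤ b) {e : ℝ} (he : e ≤ 0) : b ^ e ≤ a ^ e := by
  have he' : (0:ℝ) ≤ -e := by linarith
  have h2 : a ^ (-e) ≤ b ^ (-e) := ENNReal.rpow_le_rpow hab he'
  calc b ^ e = (b ^ (-e))⁻¹ := by rw [← ENNReal.rpow_neg, neg_neg]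
    _ ≤ (a ^ (-e))⁻¹ := ENNReal.inv_le_inv.2 h2
    _ = a ^ e := by rw [← ENNReal.rpow_neg, neg_neg]

lemma nontrivialE (hn : 1 ≤ n) : Nontrivial Euc := by
  have h : 0 < Module.finrank ℝ Euc := by
    rw [finrank_euclideanSpace_fin]; omega
  exact Module.nontrivial_of_finrank_pos h

lemma volume_ball_center_eq (hn : 1 ≤ n) (x y : Euc) {r : ℝ} (hr : 0 ≤ r) :
    volume (ball x r) = volume (ball y r) := by
  haveI := nontrivialE hn
  rw [Measure.addHaar_ball _ _ hr, Measure.addHaar_ball _ _ hr]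

lemma volume_closedBall_eq_ball (hn : 1 ≤ n) (x : Euc) (r : ℝ) :
    volume (closedBall x r) = volume (ball x r) := by
  haveI := nontrivialE hn
  exact Measure.addHaar_closedBall_eq_addHaar_ball _ _ _

lemma ball_ae_closedBall (hn : 1 ≤ n) (x : Euc) (r : ℝ) :
    (ball x r : Set Euc) =ᵐ[volume] closedBall x r := by
  haveI := nontrivialE hn
  rw [Filter.eventuallyEq_set]
  have h : volume (closedBall x r \ ball x r) = 0 := by
    refine measure_mono_null ?_ (Measure.addHaar_sphere volume x r)
    rw [← closedBall_diff_ball]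
  filter_upwards [measure_eq_zero_iff_ae_notMem.mp h] with y hy
  constructor
  · exact fun h' => ball_subset_closedBall h'
  · intro h'; by_contra hball; exact hy ⟨h', hball⟩

lemma volume_ball_toReal (hn : 1 ≤ n) (x : Euc) {r : ℝ} (hr : 0 ≤ r) :
    (volume (ball x r)).toReal = r ^ n * (volume (ball (0 : Euc) 1)).toReal := by
  haveI := nontrivialE hn
  rw [Measure.addHaar_ball _ _ hr, ENNReal.toReal_mul, ENNReal.toReal_ofReal (by positivity),
    finrank_euclideanSpace_fin]

lemma measurable_fracMax (α : ℝ) (f : Euc → ℝ) : Measurable (fracMax n α f) := by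
  apply LowerSemicontinuous.measurable
  apply lowerSemicontinuous_iSup; intro c
  apply lowerSemicontinuous_iSup; intro r
  by_cases hr : 0 < r
  · simp only [hr, iSup_pos]
    have h : (fun x => ⨆ (_ : x ∈ ball c r),
        volume (ball c r) ^ (α / n - 1) * ∫⁻ y in ball c r, (‖f y‖₊ : ℝ≥0∞)) =
        (ball c r).indicator (fun _ =>
        volume (ball c r) ^ (α / n - 1) * ∫⁻ y in ball c r, (‖f y‖₊ : ℝ≥0∞)) := by
      ext x; by_cases hx : x ∈ ball c r <;> simp [hx]
    rw [h]
    exact isOpen_ball.lowerSemicontinuous_indicator zero_le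
  · simp only [hr, iSup_false]
    exact lowerSemicontinuous_const

lemma measurable_fracMaxLocal (α : ℝ) (B₀ : Set Euc) (f : Euc → ℝ) :
    Measurable (fracMaxLocal n α B₀ f) := by
  apply LowerSemicontinuous.measurable
  apply lowerSemicontinuous_iSup; intro c
  apply lowerSemicontinuous_iSup; intro r
  by_cases hr : 0 < r
  · by_cases hsub : ball c r ⊆ B₀
    · simp only [hr, hsub, iSup_pos]
      have h : (fun x => ⨆ (_ : x ∈ ball c r),
          volume (ball c r) ^ (α / n - 1) * ∫⁻ y in ball c r, (‖f y‖₊ : ℝ≥0∞)) =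
          (ball c r).indicator (fun _ =>
          volume (ball c r) ^ (α / n - 1) * ∫⁻ y in ball c r, (‖f y‖₊ : ℝ≥0∞)) := by
        ext x; by_cases hx : x ∈ ball c r <;> simp [hx]
      rw [h]
      exact isOpen_ball.lowerSemicontinuous_indicator zero_le
    · have h : (fun x => ⨆ (_ : 0 < r) (_ : x ∈ ball c r) (_ : ball c r ⊆ B₀),
          volume (ball c r) ^ (α / n - 1) * ∫⁻ y in ball c r, (‖f y‖₊ : ℝ≥0∞)) =
          (fun _ => (0:ℝ≥0∞)) := by
        ext x; simp [hsub]
      rw [h]; exact lowerSemicontinuous_const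
  · simp only [hr, iSup_false]
    exact lowerSemicontinuous_const


def ballInd (c : Euc) (r : ℝ) : Euc → ℝ := (ball c r).indicator fun _ => 1

lemma rpow_sub_one_mul {x : ℝ≥0∞} (hx0 : x ≠ 0) (hxt : x ≠ ⊤) (e : ℝ) :
    x ^ (e - 1) * x = x ^ e := by
  calc x ^ (e-1) * x = x ^ (e-1) * x ^ (1:ℝ) := by rw [ENNReal.rpow_one]
    _ = x ^ (e-1+1) := (ENNReal.rpow_add _ _ hx0 hxt).symm
    _ = x ^ e := by ring_nf

lemma lintegral_nnnorm_ballInd (c : Euc) (r : ℝ) (s : Set Euc) :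
    ∫⁻ y in s, (‖ballInd c r y‖₊ : ℝ≥0∞) = volume (ball c r ∩ s) := by
  have h : (fun y => (‖ballInd c r y‖₊ : ℝ≥0∞)) = (ball c r).indicator fun _ => 1 := by
    ext y; by_cases hy : y ∈ ball c r <;> simp [ballInd, hy]
  rw [h, lintegral_indicator measurableSet_ball, setLIntegral_one,
    Measure.restrict_apply measurableSet_ball]

lemma fracMax_ballInd (hn : 1 ≤ n) {α : ℝ} (hα0 : 0 ≤ α) (hα1 : α ≤ n) {c : Euc} {r : ℝ}
    (hr : 0 < r) {x : Euc} (hx : x ∈ ball c r) :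
    fracMax n α (ballInd c r) x = volume (ball c r) ^ (α / n) := by
  have hn' : (0:ℝ) < n := by exact_mod_cast Nat.pos_of_ne_zero (by omega)
  have he0 : 0 ≤ α / (n:ℝ) := by positivity
  have he1 : α / (n:ℝ) - 1 ≤ 0 := by
    have h : α / (n:ℝ) ≤ 1 := by rw [div_le_one hn']; exact hα1
    linarith
  have hvB0 : volume (ball c r) ≠ 0 := (measure_ball_pos volume c hr).ne'
  have hvBt : volume (ball c r) ≠ ⊤ := measure_ball_lt_top.ne
  apply le_antisymm
  · refine iSup_le fun c' => iSup_le fun r' => iSup_le fun hr' => iSup_le fun hx' => ?_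
    rw [lintegral_nnnorm_ballInd c r _]
    have hvB'0 : volume (ball c' r') ≠ 0 := (measure_ball_pos volume c' hr').ne'
    have hvB't : volume (ball c' r') ≠ ⊤ := measure_ball_lt_top.ne
    rcases le_total (volume (ball c' r')) (volume (ball c r)) with h | h
    · calc volume (ball c' r') ^ (α/(n:ℝ)-1) * volume (ball c r ∩ ball c' r')
          ≤ volume (ball c' r') ^ (α/(n:ℝ)-1) * volume (ball c' r') :=
            mul_le_mul_right (measure_mono inter_subset_right) _
        _ = volume (ball c' r') ^ (α/(n:ℝ)) := rpow_sub_one_mul hvB'0 hvB't _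
        _ ≤ volume (ball c r) ^ (α/(n:ℝ)) := ENNReal.rpow_le_rpow h he0
    · calc volume (ball c' r') ^ (α/(n:ℝ)-1) * volume (ball c r ∩ ball c' r')
          ≤ volume (ball c' r') ^ (α/(n:ℝ)-1) * volume (ball c r) :=
            mul_le_mul_right (measure_mono inter_subset_left) _
        _ ≤ volume (ball c r) ^ (α/(n:ℝ)-1) * volume (ball c r) :=
            mul_le_mul_left (rpow_anti h he1) _
        _ = volume (ball c r) ^ (α/(n:ℝ)) := rpow_sub_one_mul hvB0 hvBt _
  · have hterm : volume (ball c r) ^ (α/(n:ℝ)) = volume (ball c r) ^ (α/(n:ℝ)-1) *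
        ∫⁻ y in ball c r, (‖ballInd c r y‖₊ : ℝ≥0∞) := by
      rw [lintegral_nnnorm_ballInd c r _, inter_self, rpow_sub_one_mul hvB0 hvBt]
    rw [hterm]
    exact le_iSup_of_le c (le_iSup_of_le r (le_iSup_of_le hr (le_iSup_of_le hx le_rfl)))

lemma fracMaxLocal_le_fracMax_mul (α : ℝ) (b : Euc → ℝ) (c : Euc) (r : ℝ) (x : Euc) :
    fracMaxLocal n α (ball c r) b x ≤ fracMax n α (fun y => b y * ballInd c r y) x := by
  refine iSup_le fun c' => iSup_le fun r' => iSup_le fun hr' => iSup_le fun hx' =>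
    iSup_le fun hsub => ?_
  have h : ∫⁻ y in ball c' r', (‖b y‖₊ : ℝ≥0∞) =
      ∫⁻ y in ball c' r', (‖b y * ballInd c r y‖₊ : ℝ≥0∞) := by
    refine setLIntegral_congr_fun measurableSet_ball (fun y hy => ?_)
    have h1 : ballInd c r y = 1 := by simp [ballInd, Set.indicator_of_mem (hsub hy)]
    rw [h1, mul_one]
  rw [h]
  exact le_iSup_of_le c' (le_iSup_of_le r' (le_iSup_of_le hr' (le_iSup_of_le hx' le_rfl)))

lemma base_le_fracMaxLocal (α : ℝ) (b : Euc → ℝ) {c : Euc} {r : ℝ} (hr : 0 < r) {x : Euc}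
    (hx : x ∈ ball c r) :
    volume (ball c r) ^ (α/(n:ℝ)-1) * ∫⁻ y in ball c r, (‖b y‖₊ : ℝ≥0∞) ≤
      fracMaxLocal n α (ball c r) b x :=
  le_iSup_of_le c (le_iSup_of_le r (le_iSup_of_le hr (le_iSup_of_le hx
    (le_iSup_of_le (subset_refl _) le_rfl))))


lemma rpow_ne_top {x : ℝ≥0∞} (hx0 : x ≠ 0) (hxt : x ≠ ⊤) (e : ℝ) : x ^ e ≠ ⊤ := by
  rcases le_or_gt 0 e with he | he
  · exact (ENNReal.rpow_lt_top_of_nonneg he hxt).ne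
  · have h : x ^ e = (x ^ (-e))⁻¹ := by rw [← ENNReal.rpow_neg, neg_neg]
    rw [h]
    exact ENNReal.inv_ne_top.2 (ENNReal.rpow_pos (pos_iff_ne_zero.2 hx0) hxt).ne'

lemma vol_ball_double (hn : 1 ≤ n) (x : Euc) {r : ℝ} (hr : 0 ≤ r) :
    volume (ball x (2*r)) = ENNReal.ofReal (2^n) * volume (ball x r) := by
  haveI := nontrivialE hn
  rw [Measure.addHaar_ball _ _ (by linarith), Measure.addHaar_ball _ _ hr, mul_pow,
    ENNReal.ofReal_mul (by positivity), mul_assoc, finrank_euclideanSpace_fin]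

lemma fracMax_lt_top (hn : 1 ≤ n) {α : ℝ} (hα0 : 0 ≤ α) (hα1 : α ≤ n) {h : Euc → ℝ}
    (hh : Integrable h volume) : ∀ᵐ x ∂(volume : Measure Euc), fracMax n α h x < ⊤ := by
  have hn' : (0:ℝ) < n := by exact_mod_cast Nat.pos_of_ne_zero (by omega)
  have he1 : α / (n:ℝ) - 1 ≤ 0 := by
    have hd : α / (n:ℝ) ≤ 1 := by rw [div_le_one hn']; exact hα1
    linarith
  have he0 : 0 ≤ α / (n:ℝ) := by positivity
  have hloc : LocallyIntegrable (fun y => ‖h y‖) volume := hh.norm.locallyIntegrable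
  filter_upwards [IsUnifLocDoublingMeasure.ae_tendsto_average (μ := (volume : Measure Euc))
    hloc 1] with x hx
  have htd : Tendsto (fun ρ : ℝ => ⨍ y in closedBall x ρ, ‖h y‖ ∂volume) (nhdsWithin 0 (Set.Ioi 0))
      (nhds ‖h x‖) := by
    refine hx (fun _ => x) id tendsto_id ?_
    filter_upwards [self_mem_nhdsWithin] with ρ hρ
    exact mem_closedBall_self (by rw [one_mul]; exact le_of_lt hρ)
  have hev : ∀ᶠ ρ in nhdsWithin (0:ℝ) (Set.Ioi 0),
      ⨍ y in closedBall x ρ, ‖h y‖ ∂volume < ‖h x‖ + 1 :=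
    htd.eventually_lt_const (by linarith [norm_nonneg (h x)])
  obtain ⟨ε, hε0, hεsub⟩ := mem_nhdsGT_iff_exists_Ioc_subset.1 hev
  have hε0' : (0:ℝ) < ε := hε0
  set K := ∫⁻ y, (‖h y‖₊ : ℝ≥0∞) with hKdef
  have hK : K ≠ ⊤ := hh.hasFiniteIntegral.ne
  set M := ‖h x‖ + 1 with hMdef
  have hM0 : 0 < M := by positivity
  set T1 := volume (ball x (ε/4)) ^ (α/(n:ℝ)-1) * K with hT1def
  set T2 := volume (ball x ε) ^ (α/(n:ℝ)) * ENNReal.ofReal (2^n * M) with hT2def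
  have hT1 : T1 ≠ ⊤ := ENNReal.mul_ne_top
    (rpow_ne_top (measure_ball_pos volume x (by linarith)).ne' measure_ball_lt_top.ne _) hK
  have hT2 : T2 ≠ ⊤ := ENNReal.mul_ne_top
    (rpow_ne_top (measure_ball_pos volume x hε0').ne' measure_ball_lt_top.ne _)
    ENNReal.ofReal_ne_top
  refine lt_of_le_of_lt (?_ : fracMax n α h x ≤ T1 + T2)
    (lt_top_iff_ne_top.2 (ENNReal.add_ne_top.2 ⟨hT1, hT2⟩))
  refine iSup_le fun c' => iSup_le fun r' => iSup_le fun hr' => iSup_le fun hx' => ?_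
  rcases le_or_gt (ε/4) r' with hcase | hcase
  · refine le_trans ?_ (le_add_right le_rfl)
    rw [hT1def]
    refine mul_le_mul' ?_ (setLIntegral_le_lintegral _ _)
    refine rpow_anti ?_ he1
    calc volume (ball x (ε/4)) = volume (ball c' (ε/4)) :=
          volume_ball_center_eq hn _ _ (by linarith)
      _ ≤ volume (ball c' r') := measure_mono (ball_subset_ball hcase)
  · refine le_trans ?_ (le_add_left le_rfl)
    have hr'0 : (0:ℝ) ≤ r' := hr'.le
    have hsub : ball c' r' ⊆ closedBall x (2*r') := by
      intro y hy
      have h1 : dist y c' < r' := mem_ball.1 hy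
      have h2 : dist x c' < r' := mem_ball.1 hx'
      have : dist y x ≤ dist y c' + dist x c' := dist_triangle_right y x c'
      exact mem_closedBall.2 (by linarith)
    have havg : ⨍ y in closedBall x (2*r'), ‖h y‖ ∂volume < M := by
      refine hεsub ⟨by linarith, by linarith⟩
    have hvcb0 : volume (closedBall x (2*r')) ≠ 0 := (measure_closedBall_pos volume x
      (by linarith)).ne'
    have hvcbt : volume (closedBall x (2*r')) ≠ ⊤ := measure_closedBall_lt_top.ne
    have hint : ∫⁻ y in ball c' r', (‖h y‖₊ : ℝ≥0∞) ≤
        ENNReal.ofReal M * volume (closedBall x (2*r')) := by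
      calc ∫⁻ y in ball c' r', (‖h y‖₊ : ℝ≥0∞)
          ≤ ∫⁻ y in closedBall x (2*r'), (‖h y‖₊ : ℝ≥0∞) := lintegral_mono_set hsub
        _ = ENNReal.ofReal (∫ y in closedBall x (2*r'), ‖h y‖) := by
            rw [ofReal_integral_eq_lintegral_ofReal (hh.norm.integrableOn)
              (Filter.Eventually.of_forall fun y => norm_nonneg _)]
            congr 1
            ext y
            exact (ofReal_norm (h y)).symm
        _ ≤ ENNReal.ofReal (M * (volume (closedBall x (2*r'))).toReal) := by
            apply ENNReal.ofReal_le_ofReal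
            have heq : ∫ y in closedBall x (2*r'), ‖h y‖ =
                (volume (closedBall x (2*r'))).toReal *
                  ⨍ y in closedBall x (2*r'), ‖h y‖ ∂volume := by
              rw [setAverage_eq, smul_eq_mul, measureReal_def, ← mul_assoc, mul_inv_cancel₀
                (by simp [ENNReal.toReal_ne_zero, hvcb0, hvcbt]), one_mul]
            rw [heq, mul_comm]
            exact mul_le_mul_of_nonneg_right havg.le ENNReal.toReal_nonneg
        _ = ENNReal.ofReal M * volume (closedBall x (2*r')) := by
            rw [mul_comm M, ENNReal.ofReal_mul ENNReal.toReal_nonneg,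
              ENNReal.ofReal_toReal hvcbt, mul_comm]
    have hvcb : volume (closedBall x (2*r')) = ENNReal.ofReal (2^n) * volume (ball c' r') := by
      rw [volume_closedBall_eq_ball hn, vol_ball_double hn x hr'0,
        volume_ball_center_eq hn x c' hr'0]
    have hvb'0 : volume (ball c' r') ≠ 0 := (measure_ball_pos volume c' hr').ne'
    have hvb't : volume (ball c' r') ≠ ⊤ := measure_ball_lt_top.ne
    calc volume (ball c' r') ^ (α/(n:ℝ)-1) * ∫⁻ y in ball c' r', (‖h y‖₊ : ℝ≥0∞)
        ≤ volume (ball c' r') ^ (α/(n:ℝ)-1) *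
          (ENNReal.ofReal M * (ENNReal.ofReal (2^n) * volume (ball c' r'))) := by
          refine mul_le_mul_right ?_ _
          rw [← hvcb]; exact hint
      _ = volume (ball c' r') ^ (α/(n:ℝ)) * ENNReal.ofReal (2^n * M) := by
          rw [ENNReal.ofReal_mul (by positivity : (0:ℝ) ≤ 2^n)]
          rw [← rpow_sub_one_mul hvb'0 hvb't (α/(n:ℝ))]
          ring
      _ ≤ T2 := by
          rw [hT2def]
          refine mul_le_mul_left (ENNReal.rpow_le_rpow ?_ he0) _
          calc volume (ball c' r') = volume (ball x r') := volume_ball_center_eq hn _ _ hr'0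
            _ ≤ volume (ball x ε) := measure_mono (ball_subset_ball (by linarith))


lemma integrableOn_ball' {b : Euc → ℝ} (hb : LocallyIntegrable b volume) (z : Euc) (ρ : ℝ) :
    IntegrableOn b (ball z ρ) volume :=
  (hb.integrableOn_isCompact (isCompact_closedBall z ρ)).mono_set ball_subset_closedBall

lemma avg_sub_avg_le (hn : 1 ≤ n) {b : Euc → ℝ} (hb : LocallyIntegrable b volume)
    {K β : ℝ}
    (H : ∀ (z : Euc) (ρ : ℝ), 0 < ρ → ∫ y in ball z ρ, |b y - ballAvg n b z ρ| ≤
      K * (volume (ball z ρ)).toReal ^ (1+β/(n:ℝ)))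
    (z : Euc) {ρ : ℝ} (hρ : 0 < ρ) {s : Set Euc} (hsub : s ⊆ ball z ρ) (hvs : volume s ≠ 0) :
    |(volume s).toReal⁻¹ * (∫ y in s, b y) - ballAvg n b z ρ| ≤
      (volume s).toReal⁻¹ * (K * (volume (ball z ρ)).toReal ^ (1+β/(n:ℝ))) := by
  have hst : volume s ≠ ⊤ :=
    (lt_of_le_of_lt (measure_mono hsub) measure_ball_lt_top).ne
  have hVs : 0 < (volume s).toReal := ENNReal.toReal_pos hvs hst
  have hbint : IntegrableOn b (ball z ρ) volume := integrableOn_ball' hb z ρ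
  have hbs : IntegrableOn b s volume := hbint.mono_set hsub
  have hcint : IntegrableOn (fun _ => ballAvg n b z ρ) s volume :=
    integrableOn_const (lt_of_le_of_lt (measure_mono hsub) measure_ball_lt_top).ne
  have hdiff : IntegrableOn (fun y => b y - ballAvg n b z ρ) (ball z ρ) volume :=
    hbint.sub (integrableOn_const measure_ball_lt_top.ne)
  have step1 : (volume s).toReal⁻¹ * (∫ y in s, b y) - ballAvg n b z ρ =
      (volume s).toReal⁻¹ * ∫ y in s, (b y - ballAvg n b z ρ) := by
    rw [integral_sub hbs hcint, setIntegral_const, smul_eq_mul, mul_sub, ← mul_assoc, measureReal_def,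
      inv_mul_cancel₀ hVs.ne', one_mul]
  rw [step1, abs_mul, abs_of_nonneg (inv_nonneg.2 hVs.le)]
  refine mul_le_mul_of_nonneg_left ?_ (inv_nonneg.2 hVs.le)
  calc |∫ y in s, (b y - ballAvg n b z ρ)| ≤ ∫ y in s, |b y - ballAvg n b z ρ| := by
        simpa [Real.norm_eq_abs] using
          norm_integral_le_integral_norm (μ := volume.restrict s)
            (fun y => b y - ballAvg n b z ρ)
    _ ≤ ∫ y in ball z ρ, |b y - ballAvg n b z ρ| := by
        refine setIntegral_mono_set hdiff.abs
          (Filter.Eventually.of_forall fun y => abs_nonneg _)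
          (HasSubset.Subset.eventuallyLE hsub)
    _ ≤ K * (volume (ball z ρ)).toReal ^ (1+β/(n:ℝ)) := H z ρ hρ

lemma vol_ratio_eq (hn : 1 ≤ n) {β K : ℝ} (hβ0 : 0 < β) {ρ : ℝ} (hρ : 0 < ρ) (x : Euc) :
    ((volume (ball x (ρ/2))).toReal)⁻¹ * (K * (volume (ball x ρ)).toReal ^ (1+β/(n:ℝ))) =
      2^n * K * ((volume (ball (0:Euc) 1)).toReal) ^ (β/(n:ℝ)) * ρ^β := by
  have hn' : (0:ℝ) < n := by exact_mod_cast Nat.pos_of_ne_zero (by omega)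
  set ν1 := (volume (ball (0:Euc) 1)).toReal with hν1def
  have hν1 : 0 < ν1 := ENNReal.toReal_pos (measure_ball_pos volume _ one_pos).ne'
    measure_ball_lt_top.ne
  rw [volume_ball_toReal hn x (by linarith : (0:ℝ) ≤ ρ/2),
    volume_ball_toReal hn x hρ.le, ← hν1def]
  have h1 : (ρ^n * ν1) ^ (1+β/(n:ℝ)) = ρ^n * ρ^β * (ν1 * ν1^(β/(n:ℝ))) := by
    rw [Real.mul_rpow (by positivity) hν1.le]
    congr 1
    · rw [← Real.rpow_natCast ρ n, ← Real.rpow_mul hρ.le, ← Real.rpow_add hρ]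
      have : (n:ℝ) * (1+β/(n:ℝ)) = (n:ℝ) + β := by field_simp
      rw [this]
    · rw [Real.rpow_add hν1, Real.rpow_one]
  rw [h1]
  have h2 : (ρ/2)^n = ρ^n / 2^n := div_pow ρ 2 n
  rw [h2]
  have hρn : (0:ℝ) < ρ^n := by positivity
  have h2n : (0:ℝ) < 2^n := by positivity
  field_simp

lemma campanato (hn : 1 ≤ n) {β : ℝ} (hβ0 : 0 < β) {b : Euc → ℝ}
    (hb : LocallyIntegrable b volume) {K : ℝ} (hK : 0 ≤ K)
    (H : ∀ (z : Euc) (ρ : ℝ), 0 < ρ → ∫ y in ball z ρ, |b y - ballAvg n b z ρ| ≤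
      K * (volume (ball z ρ)).toReal ^ (1+β/(n:ℝ)))
    (c : Euc) {r : ℝ} (hr : 0 < r) :
    ∀ᵐ x ∂(volume.restrict (ball c r)),
      |b x - ballAvg n b c r| ≤
        (2^n * 2^β * ((1 - ((1:ℝ)/2)^β)⁻¹ + 1)) * K *
          (volume (ball c r)).toReal ^ (β/(n:ℝ)) := by
  have hn' : (0:ℝ) < n := by exact_mod_cast Nat.pos_of_ne_zero (by omega)
  set ν1 := (volume (ball (0:Euc) 1)).toReal with hν1def
  have hν1 : 0 < ν1 := ENNReal.toReal_pos (measure_ball_pos volume _ one_pos).ne'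
    measure_ball_lt_top.ne
  set w := ((1:ℝ)/2) ^ β with hwdef
  have hw0 : 0 ≤ w := Real.rpow_nonneg (by norm_num) β
  have hw1 : w < 1 := Real.rpow_lt_one (by norm_num) (by norm_num) hβ0
  filter_upwards [ae_restrict_of_ae
    (IsUnifLocDoublingMeasure.ae_tendsto_average (μ := (volume : Measure Euc))
      hb 1), ae_restrict_mem measurableSet_ball] with x hx hxB
  set ρ : ℕ → ℝ := fun k => 2*r*((1:ℝ)/2)^k with hρdef
  have hρpos : ∀ k, 0 < ρ k := fun k => by positivity
  have hρhalf : ∀ k, ρ (k+1) = ρ k / 2 := fun k => by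
    simp only [hρdef, pow_succ]; ring
  set a : ℕ → ℝ := fun k => ballAvg n b x (ρ k) with hadef
  -- convergence of averages
  have htends : Filter.Tendsto a Filter.atTop (nhds (b x)) := by
    have h1 : Filter.Tendsto ρ Filter.atTop (nhdsWithin 0 (Set.Ioi (0:ℝ))) := by
      apply tendsto_nhdsWithin_of_tendsto_nhds_of_eventually_within
      · have h2 : Filter.Tendsto (fun k : ℕ => ((1:ℝ)/2)^k) Filter.atTop (nhds 0) :=
          tendsto_pow_atTop_nhds_zero_of_lt_one (by norm_num) (by norm_num)
        have h3 := h2.const_mul (2*r)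
        simpa [hρdef, mul_zero] using h3
      · exact Filter.Eventually.of_forall fun k => hρpos k
    have h4 := hx (fun _ => x) ρ h1
      (Filter.Eventually.of_forall fun k => mem_closedBall_self (by
        rw [one_mul]; exact (hρpos k).le))
    refine h4.congr fun k => ?_
    rw [setAverage_eq, smul_eq_mul, hadef]
    simp only [ballAvg]
    rw [measureReal_def, volume_closedBall_eq_ball hn, setIntegral_congr_set (ball_ae_closedBall hn x (ρ k)).symm]
  -- step estimates
  set Cst := 2^n * K * ν1 ^ (β/(n:ℝ)) * (2*r)^β with hCstdef
  have hCst0 : 0 ≤ Cst := by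
    have : (0:ℝ) ≤ (2*r)^β := Real.rpow_nonneg (by linarith) β
    positivity
  set d : ℕ → ℝ := fun k => Cst * w^k with hddef
  have hρrpow : ∀ k, (ρ k)^β = (2*r)^β * w^k := by
    intro k
    rw [hρdef]
    rw [Real.mul_rpow (by linarith) (by positivity)]
    congr 1
    rw [← Real.rpow_natCast ((1:ℝ)/2) k, ← Real.rpow_mul (by norm_num), mul_comm,
      Real.rpow_mul (by norm_num), Real.rpow_natCast, hwdef]
  have hstep : ∀ k, dist (a k) (a (k+1)) ≤ d k := by
    intro k
    have h5 := avg_sub_avg_le hn hb H x (hρpos k)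
      (ball_subset_ball (by rw [hρhalf k]; linarith [hρpos k]) :
        ball x (ρ (k+1)) ⊆ ball x (ρ k))
      (measure_ball_pos volume x (hρpos (k+1))).ne'
    have h6 : (volume (ball x (ρ (k+1)))).toReal⁻¹ * ∫ y in ball x (ρ (k+1)), b y = a (k+1) := rfl
    rw [h6] at h5
    have h7 : (volume (ball x (ρ (k+1)))).toReal⁻¹ *
        (K * (volume (ball x (ρ k))).toReal ^ (1+β/(n:ℝ))) = d k := by
      rw [hρhalf k, vol_ratio_eq hn hβ0 (hρpos k) x, ← hν1def, hddef, hCstdef, hρrpow k]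
      ring
    rw [Real.dist_eq, abs_sub_comm]
    rw [h7] at h5
    exact h5
  have hsummable : Summable d := by
    apply Summable.mul_left
    exact summable_geometric_of_lt_one hw0 hw1
  have htsum : ∑' k, d k = Cst * (1-w)⁻¹ := by
    rw [hddef, tsum_mul_left, tsum_geometric_of_lt_one hw0 hw1]
  have hmain : |a 0 - b x| ≤ Cst * (1-w)⁻¹ := by
    have := dist_le_tsum_of_dist_le_of_tendsto₀ d hstep hsummable htends
    rw [Real.dist_eq] at this
    rw [← htsum]
    exact this
  -- comparison of a 0 with the average over ball c r
  have hsub2 : ball c r ⊆ ball x (2*r) := by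
    intro y hy
    have h1 : dist y c < r := mem_ball.1 hy
    have h2 : dist x c < r := mem_ball.1 hxB
    have h3 : dist y x ≤ dist y c + dist x c := dist_triangle_right y x c
    exact mem_ball.2 (by linarith)
  have hcomp := avg_sub_avg_le hn hb H x (by linarith : (0:ℝ) < 2*r) hsub2
    (measure_ball_pos volume c hr).ne'
  have hcompeq : (volume (ball c r)).toReal⁻¹ * ∫ y in ball c r, b y = ballAvg n b c r := rfl
  rw [hcompeq] at hcomp
  have hρ0eq : ballAvg n b x (2*r) = a 0 := by
    rw [hadef]; simp only [hρdef]; norm_num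
  rw [hρ0eq] at hcomp
  have hvolcr : (volume (ball c r)).toReal = (volume (ball x ((2*r)/2))).toReal := by
    rw [volume_ball_center_eq hn c x hr.le]
    norm_num
  have hcomp2 : |ballAvg n b c r - a 0| ≤ 2^n * K * ν1 ^ (β/(n:ℝ)) * (2*r)^β := by
    calc |ballAvg n b c r - a 0| ≤
        (volume (ball c r)).toReal⁻¹ * (K * (volume (ball x (2*r))).toReal ^ (1+β/(n:ℝ))) := hcomp
      _ = 2^n * K * ν1 ^ (β/(n:ℝ)) * (2*r)^β := by
          rw [hvolcr, vol_ratio_eq hn hβ0 (by linarith : (0:ℝ) < 2*r) x, ← hν1def]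
  -- put everything together
  have htri : |b x - ballAvg n b c r| ≤ |a 0 - b x| + |ballAvg n b c r - a 0| := by
    have := abs_sub (b x - a 0) (ballAvg n b c r - a 0)
    calc |b x - ballAvg n b c r| = |(b x - a 0) - (ballAvg n b c r - a 0)| := by ring_nf
      _ ≤ |b x - a 0| + |ballAvg n b c r - a 0| := abs_sub _ _
      _ = |a 0 - b x| + |ballAvg n b c r - a 0| := by rw [abs_sub_comm]
  have hVβ : (volume (ball c r)).toReal ^ (β/(n:ℝ)) = r^β * ν1 ^ (β/(n:ℝ)) := by
    rw [volume_ball_toReal hn c hr.le, ← hν1def, Real.mul_rpow (by positivity) hν1.le]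
    congr 1
    rw [← Real.rpow_natCast r n, ← Real.rpow_mul hr.le]
    have : (n:ℝ) * (β/(n:ℝ)) = β := by field_simp
    rw [this]
  have h2rβ : (2*r)^β = 2^β * r^β := Real.mul_rpow (by norm_num) hr.le
  calc |b x - ballAvg n b c r| ≤ |a 0 - b x| + |ballAvg n b c r - a 0| := htri
    _ ≤ Cst * (1-w)⁻¹ + 2^n * K * ν1 ^ (β/(n:ℝ)) * (2*r)^β := add_le_add hmain hcomp2
    _ = (2^n * 2^β * ((1 - ((1:ℝ)/2)^β)⁻¹ + 1)) * K *
          (volume (ball c r)).toReal ^ (β/(n:ℝ)) := by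
        rw [hVβ, hCstdef, h2rβ, ← hwdef]
        ring


def commFn (α : ℝ) (b : Euc → ℝ) (c : Euc) (r : ℝ) : Euc → ℝ :=
  fun x => b x * (fracMax n α (ballInd c r) x).toReal -
    (fracMax n α (fun y => b y * ballInd c r y) x).toReal

lemma commFn_aesm (α : ℝ) {b : Euc → ℝ} (hb : LocallyIntegrable b volume) (c : Euc) (r : ℝ) :
    AEStronglyMeasurable (commFn α b c r) volume :=
  (hb.aestronglyMeasurable.mul
    (measurable_fracMax α (ballInd c r)).ennreal_toReal.aestronglyMeasurable).sub
    (measurable_fracMax α _).ennreal_toReal.aestronglyMeasurable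

lemma perBall (hn : 1 ≤ n) {α β p q A' : ℝ} (hα0 : 0 < α) (hαn : α < n)
    (hp1 : 1 < p) (hq : 1 / q = 1 / p - (α + β) / n) (hq0 : 0 < q)
    {b : Euc → ℝ} (hb : LocallyIntegrable b volume) (hA'0 : 0 ≤ A')
    (hA' : ∀ f : Euc → ℝ, MemLp f (ENNReal.ofReal p) volume →
      eLpNorm (fun x => b x * (fracMax n α f x).toReal -
          (fracMax n α (fun y => b y * f y) x).toReal) (ENNReal.ofReal q) volume ≤
        ENNReal.ofReal A' * eLpNorm f (ENNReal.ofReal p) volume)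
    (c : Euc) {r : ℝ} (hr : 0 < r) :
    (∫⁻ x in ball c r, (‖commFn α b c r x‖₊ : ℝ≥0∞) ^ q ≤
        (ENNReal.ofReal A' * volume (ball c r) ^ (1/p)) ^ q) ∧
    (∀ᵐ x ∂(volume.restrict (ball c r)),
      |b x - (volume (ball c r)).toReal ^ (-(α/(n:ℝ))) *
          (fracMaxLocal n α (ball c r) b x).toReal|
        ≤ ((volume (ball c r)).toReal ^ (α/(n:ℝ)))⁻¹ * |commFn α b c r x| +
          |b x - ballAvg n b c r| ∧
      ((volume (ball c r)).toReal⁻¹ * ∫ y in ball c r, |b y|) - b x ≤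
        ((volume (ball c r)).toReal ^ (α/(n:ℝ)))⁻¹ * |commFn α b c r x|) := by
  have hp0 : (0:ℝ) < p := by linarith
  have hVt : volume (ball c r) ≠ ⊤ := measure_ball_lt_top.ne
  have hV0 : volume (ball c r) ≠ 0 := (measure_ball_pos volume c hr).ne'
  have hV : 0 < (volume (ball c r)).toReal := ENNReal.toReal_pos hV0 hVt
  have hm : 0 < (volume (ball c r)).toReal ^ (α/(n:ℝ)) := Real.rpow_pos_of_pos hV _
  -- apply the hypothesis to the indicator function
  have hfmem : MemLp (ballInd c r) (ENNReal.ofReal p) volume :=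
    memLp_indicator_const _ measurableSet_ball _ (Or.inr hVt)
  have hfnorm : eLpNorm (ballInd c r) (ENNReal.ofReal p) volume =
      volume (ball c r) ^ (1/p) := by
    rw [ballInd, eLpNorm_indicator_const measurableSet_ball
      (ENNReal.ofReal_pos.2 hp0).ne' ENNReal.ofReal_ne_top, ENNReal.toReal_ofReal hp0.le]
    simp
  have hgnorm : eLpNorm (commFn α b c r) (ENNReal.ofReal q) volume ≤
      ENNReal.ofReal A' * volume (ball c r) ^ (1/p) := by
    have h := hA' (ballInd c r) hfmem
    rw [hfnorm] at h
    exact h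
  -- the L^q bound on the commutator over the ball
  have hSq : ∫⁻ x in ball c r, (‖commFn α b c r x‖₊ : ℝ≥0∞) ^ q ≤
      (ENNReal.ofReal A' * volume (ball c r) ^ (1/p)) ^ q := by
    have h1 : eLpNorm (commFn α b c r) (ENNReal.ofReal q) volume =
        (∫⁻ x, (‖commFn α b c r x‖₊ : ℝ≥0∞) ^ q) ^ (1/q) := by
      rw [eLpNorm_eq_lintegral_rpow_enorm_toReal (ENNReal.ofReal_pos.2 hq0).ne'
        ENNReal.ofReal_ne_top, ENNReal.toReal_ofReal hq0.le]
      rfl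
    have h3 := hgnorm
    rw [h1] at h3
    have h2 : ∫⁻ x, (‖commFn α b c r x‖₊ : ℝ≥0∞) ^ q ≤
        (ENNReal.ofReal A' * volume (ball c r) ^ (1/p)) ^ q := by
      calc ∫⁻ x, (‖commFn α b c r x‖₊ : ℝ≥0∞) ^ q
          = ((∫⁻ x, (‖commFn α b c r x‖₊ : ℝ≥0∞) ^ q) ^ (1/q)) ^ q := by
            rw [← ENNReal.rpow_mul, one_div, inv_mul_cancel₀ hq0.ne', ENNReal.rpow_one]
        _ ≤ (ENNReal.ofReal A' * volume (ball c r) ^ (1/p)) ^ q :=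
            ENNReal.rpow_le_rpow h3 hq0.le
    exact le_trans (setLIntegral_le_lintegral _ _) h2
  refine ⟨hSq, ?_⟩
  -- pointwise facts
  have hbint : IntegrableOn b (ball c r) volume := integrableOn_ball' hb c r
  have hfun : (fun y => b y * ballInd c r y) = (ball c r).indicator b := by
    funext y; by_cases hy : y ∈ ball c r <;> simp [ballInd, hy]
  have hhint : Integrable ((ball c r).indicator b) volume :=
    (integrable_indicator_iff measurableSet_ball).2 hbint
  have hgood : ∀ᵐ x ∂(volume : Measure Euc),
      fracMax n α (fun y => b y * ballInd c r y) x < ⊤ := by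
    rw [hfun]; exact fracMax_lt_top hn hα0.le hαn.le hhint
  have hIenn : ∫⁻ y in ball c r, (‖b y‖₊:ℝ≥0∞) =
      ENNReal.ofReal (∫ y in ball c r, |b y|) := by
    rw [ofReal_integral_eq_lintegral_ofReal hbint.abs
      (Filter.Eventually.of_forall fun y => abs_nonneg _)]
    refine lintegral_congr fun y => ?_
    rw [← Real.norm_eq_abs, ofReal_norm]
    rfl
  have hbavg_le : |ballAvg n b c r| ≤ (volume (ball c r)).toReal⁻¹ * ∫ y in ball c r, |b y| := by
    rw [ballAvg, abs_mul, abs_of_nonneg (inv_nonneg.2 hV.le)]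
    refine mul_le_mul_of_nonneg_left ?_ (inv_nonneg.2 hV.le)
    simpa [Real.norm_eq_abs] using norm_integral_le_integral_norm
      (μ := volume.restrict (ball c r)) b
  filter_upwards [ae_restrict_of_ae hgood, ae_restrict_mem measurableSet_ball] with x hfin hxB
  set m := (volume (ball c r)).toReal ^ (α/(n:ℝ)) with hmdef
  set I := (volume (ball c r)).toReal⁻¹ * ∫ y in ball c r, |b y| with hIdef
  have hI0 : 0 ≤ I := by
    rw [hIdef]
    have : 0 ≤ ∫ y in ball c r, |b y| :=
      integral_nonneg fun y => abs_nonneg _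
    positivity
  set MLe := fracMaxLocal n α (ball c r) b x with hMLedef
  set MGe := fracMax n α (fun y => b y * ballInd c r y) x with hMGedef
  have hMLe : MLe ≤ MGe := fracMaxLocal_le_fracMax_mul α b c r x
  have hMGfin : MGe ≠ ⊤ := hfin.ne
  have hMLfin : MLe ≠ ⊤ := (lt_of_le_of_lt hMLe hfin).ne
  have hML_le_MG : MLe.toReal ≤ MGe.toReal := ENNReal.toReal_mono hMGfin hMLe
  have hm_eq : (fracMax n α (ballInd c r) x).toReal = m := by
    rw [fracMax_ballInd hn hα0.le hαn.le hr hxB, ← ENNReal.toReal_rpow]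
  have hg_eq : commFn α b c r x = b x * m - MGe.toReal := by
    rw [commFn, hm_eq, hMGedef]
  have hIm : m * I ≤ MLe.toReal := by
    have h10 : (volume (ball c r) ^ (α/(n:ℝ)-1) *
        ∫⁻ y in ball c r, (‖b y‖₊:ℝ≥0∞)).toReal ≤ MLe.toReal :=
      ENNReal.toReal_mono hMLfin (base_le_fracMaxLocal α b hr hxB)
    rw [ENNReal.toReal_mul, hIenn, ENNReal.toReal_ofReal
      (integral_nonneg fun y => abs_nonneg _), ← ENNReal.toReal_rpow] at h10
    have h11 : (volume (ball c r)).toReal ^ (α/(n:ℝ)-1) = m * (volume (ball c r)).toReal⁻¹ := by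
      rw [hmdef, Real.rpow_sub hV, Real.rpow_one, div_eq_mul_inv]
    rw [h11, mul_assoc] at h10
    rw [hIdef]
    exact h10
  have hg1 : MGe.toReal - m * b x ≤ |commFn α b c r x| := by
    have h12 : MGe.toReal - m * b x = -(commFn α b c r x) := by rw [hg_eq]; ring
    rw [h12]
    exact neg_le_abs _
  have hg2 : m⁻¹ * (MGe.toReal - m * b x) ≤ m⁻¹ * |commFn α b c r x| :=
    mul_le_mul_of_nonneg_left hg1 (inv_nonneg.2 hm.le)
  have hg3 : m⁻¹ * (MGe.toReal - m * b x) = m⁻¹ * MGe.toReal - b x := by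
    field_simp
  have hup : m⁻¹ * MLe.toReal - b x ≤ m⁻¹ * |commFn α b c r x| := by
    have h13 : m⁻¹ * MLe.toReal ≤ m⁻¹ * MGe.toReal :=
      mul_le_mul_of_nonneg_left hML_le_MG (inv_nonneg.2 hm.le)
    linarith [hg2, hg3.symm ▸ hg2]
  have hlowI : I ≤ m⁻¹ * MLe.toReal := by
    have h14 := mul_le_mul_of_nonneg_left hIm (inv_nonneg.2 hm.le)
    rwa [← mul_assoc, inv_mul_cancel₀ hm.ne', one_mul] at h14
  have hii : I - b x ≤ m⁻¹ * |commFn α b c r x| := by linarith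
  have hVm : (volume (ball c r)).toReal ^ (-(α/(n:ℝ))) = m⁻¹ := by
    rw [hmdef, Real.rpow_neg hV.le]
  constructor
  · rw [hVm]
    have habs1 : 0 ≤ m⁻¹ * |commFn α b c r x| := by positivity
    have habs2 : b x - m⁻¹ * MLe.toReal ≤ |b x - ballAvg n b c r| := by
      have h15 : ballAvg n b c r ≤ |ballAvg n b c r| := le_abs_self _
      have h16 : b x - ballAvg n b c r ≤ |b x - ballAvg n b c r| := le_abs_self _
      linarith [hbavg_le]
    rw [abs_le]
    constructor
    · have := hup
      linarith [abs_nonneg (b x - ballAvg n b c r)]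
    · linarith
  · rw [hVm] at *
    exact hii


lemma osc (hn : 1 ≤ n) {α β p q A' : ℝ} (hα0 : 0 < α) (hαn : α < n)
    (hp1 : 1 < p) (hq : 1 / q = 1 / p - (α + β) / n) (hq0 : 0 < q) (hq1 : 1 < q)
    {b : Euc → ℝ} (hb : LocallyIntegrable b volume) (hA'0 : 0 ≤ A')
    (hA' : ∀ f : Euc → ℝ, MemLp f (ENNReal.ofReal p) volume →
      eLpNorm (fun x => b x * (fracMax n α f x).toReal -
          (fracMax n α (fun y => b y * f y) x).toReal) (ENNReal.ofReal q) volume ≤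
        ENNReal.ofReal A' * eLpNorm f (ENNReal.ofReal p) volume)
    (c : Euc) {r : ℝ} (hr : 0 < r) :
    ∫ y in ball c r, |b y - ballAvg n b c r| ≤
      (2*A') * (volume (ball c r)).toReal ^ (1+β/(n:ℝ)) := by
  have hn' : (0:ℝ) < n := by exact_mod_cast Nat.pos_of_ne_zero (by omega)
  obtain ⟨hSq, hptwise⟩ := perBall hn hα0 hαn hp1 hq hq0 hb hA'0 hA' c hr
  have hp0 : (0:ℝ) < p := by linarith
  have hVt : volume (ball c r) ≠ ⊤ := measure_ball_lt_top.ne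
  have hV0 : volume (ball c r) ≠ 0 := (measure_ball_pos volume c hr).ne'
  have hV : 0 < (volume (ball c r)).toReal := ENNReal.toReal_pos hV0 hVt
  have hm : 0 < (volume (ball c r)).toReal ^ (α/(n:ℝ)) := Real.rpow_pos_of_pos hV _
  set g := commFn α b c r with hgdef
  set V := (volume (ball c r)).toReal with hVdef
  -- integrability of g on the ball
  haveI : IsFiniteMeasure (volume.restrict (ball c r)) :=
    ⟨by rw [Measure.restrict_apply_univ]; exact measure_ball_lt_top⟩
  have hgmem : MemLp g (ENNReal.ofReal q) (volume.restrict (ball c r)) := by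
    refine ⟨(commFn_aesm α hb c r).restrict, ?_⟩
    rw [eLpNorm_eq_lintegral_rpow_enorm_toReal (ENNReal.ofReal_pos.2 hq0).ne'
      ENNReal.ofReal_ne_top, ENNReal.toReal_ofReal hq0.le]
    refine ENNReal.rpow_lt_top_of_nonneg (by positivity) ?_
    refine (lt_of_le_of_lt hSq ?_).ne
    refine ENNReal.rpow_lt_top_of_nonneg hq0.le ?_
    exact ENNReal.mul_ne_top ENNReal.ofReal_ne_top (rpow_ne_top hV0 hVt _)
  have hgint : IntegrableOn g (ball c r) volume :=
    hgmem.integrable (by simpa using ENNReal.ofReal_le_ofReal hq1.le)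
  -- Hoelder inequality over the ball
  have hconj : q.HolderConjugate (Real.conjExponent q) := Real.HolderConjugate.conjExponent hq1
  have hHold : ∫⁻ x in ball c r, (‖g x‖₊ : ℝ≥0∞) ≤
      (ENNReal.ofReal A' * volume (ball c r) ^ (1/p)) * volume (ball c r) ^ (1 - 1/q) := by
    have h1 := ENNReal.lintegral_mul_le_Lp_mul_Lq (volume.restrict (ball c r)) hconj
      ((commFn_aesm α hb c r).restrict.aemeasurable.enorm)
      (aemeasurable_const (b := (1:ℝ≥0∞)))
    simp only [Pi.mul_apply, mul_one, ENNReal.one_rpow] at h1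
    rw [lintegral_one, Measure.restrict_apply_univ] at h1
    refine le_trans h1 ?_
    refine mul_le_mul ?_ ?_ zero_le zero_le
    · calc (∫⁻ x in ball c r, (‖g x‖₊ : ℝ≥0∞) ^ q) ^ (1/q)
          ≤ ((ENNReal.ofReal A' * volume (ball c r) ^ (1/p)) ^ q) ^ (1/q) :=
            ENNReal.rpow_le_rpow hSq (by positivity)
        _ = ENNReal.ofReal A' * volume (ball c r) ^ (1/p) := by
            rw [← ENNReal.rpow_mul, mul_one_div, div_self hq0.ne', ENNReal.rpow_one]
    · have h2 : 1 / Real.conjExponent q = 1 - 1/q := by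
        rw [one_div, one_div, ← hconj.one_sub_inv]
      rw [h2]
  have hgabs : ∫ x in ball c r, |g x| ≤ A' * V ^ (1/p) * V ^ (1 - 1/q) := by
    have h3 : ∫ x in ball c r, |g x| = (∫⁻ x in ball c r, (‖g x‖₊ : ℝ≥0∞)).toReal := by
      rw [integral_eq_lintegral_of_nonneg_ae (Filter.Eventually.of_forall fun x => abs_nonneg _)
        (commFn_aesm α hb c r).restrict.norm]
      congr 1
      refine lintegral_congr fun x => ?_
      rw [← Real.norm_eq_abs, ofReal_norm]
      rfl
    rw [h3]
    have h4 := ENNReal.toReal_mono ?_ hHold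
    · refine le_trans h4 (le_of_eq ?_)
      rw [ENNReal.toReal_mul, ENNReal.toReal_mul, ENNReal.toReal_ofReal hA'0,
        ← ENNReal.toReal_rpow, ← ENNReal.toReal_rpow, hVdef]
    · exact ENNReal.mul_ne_top (ENNReal.mul_ne_top ENNReal.ofReal_ne_top
        (rpow_ne_top hV0 hVt _)) (rpow_ne_top hV0 hVt _)
  -- the one-sided pointwise bound integrates to the full oscillation bound
  set u : Euc → ℝ := fun y => ballAvg n b c r - b y with hudef
  have hbint : IntegrableOn b (ball c r) volume := integrableOn_ball' hb c r
  have huint : IntegrableOn u (ball c r) volume :=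
    (integrableOn_const measure_ball_lt_top.ne).sub hbint
  have huposint : Integrable (fun y => max (u y) 0) (volume.restrict (ball c r)) :=
    huint.pos_part
  have hmginv : Integrable (fun y => ((volume (ball c r)).toReal ^ (α/(n:ℝ)))⁻¹ * |g y|)
      (volume.restrict (ball c r)) := (hgint.abs.const_mul _)
  have huzero : ∫ y in ball c r, u y = 0 := by
    rw [hudef]
    simp only
    rw [integral_sub (integrableOn_const (C := ballAvg n b c r) measure_ball_lt_top.ne) hbint,
      setIntegral_const, smul_eq_mul, ballAvg, ← mul_assoc, measureReal_def, mul_inv_cancel₀ hV.ne', one_mul,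
      sub_self]
  have hupos_le : ∫ y in ball c r, max (u y) 0 ≤
      ∫ y in ball c r, ((volume (ball c r)).toReal ^ (α/(n:ℝ)))⁻¹ * |g y| := by
    refine integral_mono_ae huposint hmginv ?_
    filter_upwards [hptwise] with y hy
    rcases hy with ⟨_, hy2⟩
    have h5 : ballAvg n b c r ≤ (volume (ball c r)).toReal⁻¹ * ∫ z in ball c r, |b z| := by
      have h6 : |ballAvg n b c r| ≤ (volume (ball c r)).toReal⁻¹ * ∫ z in ball c r, |b z| := by
        rw [ballAvg, abs_mul, abs_of_nonneg (inv_nonneg.2 hV.le)]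
        refine mul_le_mul_of_nonneg_left ?_ (inv_nonneg.2 hV.le)
        simpa [Real.norm_eq_abs] using norm_integral_le_integral_norm
          (μ := volume.restrict (ball c r)) b
      exact le_trans (le_abs_self _) h6
    have h7 : u y ≤ ((volume (ball c r)).toReal ^ (α/(n:ℝ)))⁻¹ * |g y| := by
      rw [hudef]
      simp only
      linarith
    exact max_le h7 (by positivity)
  have habs_eq : ∫ y in ball c r, |b y - ballAvg n b c r| =
      2 * ∫ y in ball c r, max (u y) 0 := by
    have h8 : ∀ y, |b y - ballAvg n b c r| = 2 * max (u y) 0 - u y := by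
      intro y
      rw [hudef]
      simp only
      rcases le_total (b y) (ballAvg n b c r) with h | h
      · rw [abs_of_nonpos (by linarith), max_eq_left (by linarith)]
        ring
      · rw [abs_of_nonneg (by linarith), max_eq_right (by linarith)]
        ring
    calc ∫ y in ball c r, |b y - ballAvg n b c r|
        = ∫ y in ball c r, (2 * max (u y) 0 - u y) := by
          exact integral_congr_ae (Filter.Eventually.of_forall h8)
      _ = 2 * (∫ y in ball c r, max (u y) 0) - ∫ y in ball c r, u y := by
          rw [integral_sub (huposint.const_mul 2) huint, integral_const_mul]
      _ = 2 * ∫ y in ball c r, max (u y) 0 := by rw [huzero]; ring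
  have hVinv : (V ^ (α/(n:ℝ)))⁻¹ * (A' * V ^ (1/p) * V ^ (1 - 1/q)) =
      A' * V ^ (1+β/(n:ℝ)) := by
    have he : 1/p + (1 - 1/q) + -(α/(n:ℝ)) = 1 + β/(n:ℝ) := by
      have hab : (α+β)/(n:ℝ) = α/(n:ℝ) + β/(n:ℝ) := add_div α β (n:ℝ)
      rw [hq] at *
      linarith [hab]
    have h1 : V ^ (1/p) * V ^ (1 - 1/q) * V ^ (-(α/(n:ℝ))) = V ^ (1+β/(n:ℝ)) := by
      rw [← Real.rpow_add hV, ← Real.rpow_add hV, he]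
    calc (V ^ (α/(n:ℝ)))⁻¹ * (A' * V ^ (1/p) * V ^ (1 - 1/q))
        = A' * (V ^ (1/p) * V ^ (1 - 1/q) * V ^ (-(α/(n:ℝ)))) := by
          rw [Real.rpow_neg hV.le]; ring
      _ = A' * V ^ (1+β/(n:ℝ)) := by rw [h1]
  calc ∫ y in ball c r, |b y - ballAvg n b c r| = 2 * ∫ y in ball c r, max (u y) 0 := habs_eq
    _ ≤ 2 * ∫ y in ball c r, ((volume (ball c r)).toReal ^ (α/(n:ℝ)))⁻¹ * |g y| := by
        linarith [hupos_le]
    _ = 2 * (((volume (ball c r)).toReal ^ (α/(n:ℝ)))⁻¹ * ∫ y in ball c r, |g y|) := by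
        rw [integral_const_mul]
    _ ≤ 2 * ((V ^ (α/(n:ℝ)))⁻¹ * (A' * V ^ (1/p) * V ^ (1 - 1/q))) := by
        have h9 : 0 ≤ ((V:ℝ) ^ (α/(n:ℝ)))⁻¹ := by positivity
        have := mul_le_mul_of_nonneg_left hgabs h9
        rw [hVdef]
        linarith [this]
    _ = (2*A') * (volume (ball c r)).toReal ^ (1+β/(n:ℝ)) := by
        rw [hVinv, ← hVdef]; ring

end

end Stmt5Aux

/-- if the nonlinear commutator `[b, M_α]` is bounded from `L^p(ℝⁿ)` to
`L^q(ℝⁿ)` with `1 < p < n/(α+β)` and `1/q = 1/p - (α+β)/n`, then for every ball `B`,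
`(|B|⁻¹ ∫_B |b(x) - |B|^{-α/n} M_{α,B} b(x)|^q dx)^{1/q} ≤ C |B|^{β/n}`. -/
theorem stmt5 (n : ℕ) (hn : 1 ≤ n) (α β : ℝ) (hβ0 : 0 < β) (hβ1 : β < 1)
    (hα0 : 0 < α) (hαn : α < n) (hαβn : α + β < n)
    (p q : ℝ) (hp1 : 1 < p) (hp2 : p < n / (α + β))
    (hq : 1 / q = 1 / p - (α + β) / n)
    (b : EuclideanSpace ℝ (Fin n) → ℝ) (hb : LocallyIntegrable b volume)
    (A : ℝ)
    (hA : ∀ f : EuclideanSpace ℝ (Fin n) → ℝ, MemLp f (ENNReal.ofReal p) volume →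
      eLpNorm
        (fun x => b x * (fracMax n α f x).toReal -
          (fracMax n α (fun y => b y * f y) x).toReal)
        (ENNReal.ofReal q) volume ≤
        ENNReal.ofReal A * eLpNorm f (ENNReal.ofReal p) volume) :
    ∃ C : ℝ, ∀ (c : EuclideanSpace ℝ (Fin n)) (r : ℝ), 0 < r →
      ((volume (ball c r)).toReal⁻¹ *
          ∫ x in ball c r,
            |b x - (volume (ball c r)).toReal ^ (-(α / n)) *
              (fracMaxLocal n α (ball c r) b x).toReal| ^ q) ^ (1 / q) ≤
        C * (volume (ball c r)).toReal ^ (β / n) := by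
  classical
  have hn' : (0:ℝ) < n := by exact_mod_cast Nat.pos_of_ne_zero (by omega)
  have hαβ0 : (0:ℝ) < α + β := by linarith
  have hp0 : (0:ℝ) < p := by linarith
  have hpn : (α+β)/(n:ℝ) < 1/p := by
    rw [div_lt_div_iff₀ hn' hp0]
    have h1 := (lt_div_iff₀ hαβ0).1 hp2
    nlinarith
  have h1q0 : 0 < 1/q := by rw [hq]; linarith
  have hq0 : 0 < q := one_div_pos.mp h1q0
  have h1q1 : 1/q < 1 := by
    have h1p : 1/p < 1 := by rw [div_lt_one hp0]; exact hp1
    have h1ab : 0 < (α+β)/(n:ℝ) := by positivity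
    rw [hq]; linarith
  have hq1 : 1 < q := (div_lt_one hq0).mp h1q1
  set A' := max A 0 with hA'def
  have hA'0 : 0 ≤ A' := le_max_right _ _
  have hA' : ∀ f : EuclideanSpace ℝ (Fin n) → ℝ, MemLp f (ENNReal.ofReal p) volume →
      eLpNorm (fun x => b x * (fracMax n α f x).toReal -
          (fracMax n α (fun y => b y * f y) x).toReal) (ENNReal.ofReal q) volume ≤
        ENNReal.ofReal A' * eLpNorm f (ENNReal.ofReal p) volume := fun f hf =>
    le_trans (hA f hf)
      (mul_le_mul_left (ENNReal.ofReal_le_ofReal (le_max_left _ _)) _)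
  set wgeo := ((1:ℝ)/2) ^ β with hwgeo
  have hwgeo1 : wgeo < 1 := Real.rpow_lt_one (by norm_num) (by norm_num) hβ0
  have hwgeo0 : 0 ≤ wgeo := Real.rpow_nonneg (by norm_num) β
  set CC := (2:ℝ)^n * 2^β * ((1 - ((1:ℝ)/2)^β)⁻¹ + 1) with hCCdef
  have hCC0 : 0 ≤ CC := by
    have h2 : 0 < 1 - wgeo := by linarith
    have h3 : (0:ℝ) ≤ (1 - ((1:ℝ)/2)^β)⁻¹ := by
      rw [← hwgeo]
      positivity
    have h4 : (0:ℝ) ≤ (2:ℝ)^β := Real.rpow_nonneg (by norm_num) β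
    positivity
  refine ⟨A' + CC * (2*A'), ?_⟩
  intro c r hr
  have hVt : volume (ball c r) ≠ ⊤ := measure_ball_lt_top.ne
  have hV0 : volume (ball c r) ≠ 0 := (measure_ball_pos volume c hr).ne'
  set V := (volume (ball c r)).toReal with hVdef
  have hV : 0 < V := ENNReal.toReal_pos hV0 hVt
  have hm : 0 < V ^ (α/(n:ℝ)) := Real.rpow_pos_of_pos hV _
  obtain ⟨hSq, hptwise⟩ := Stmt5Aux.perBall hn hα0 hαn hp1 hq hq0 hb hA'0 hA' c hr
  have hosc : ∀ (z : EuclideanSpace ℝ (Fin n)) (ρ : ℝ), 0 < ρ →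
      ∫ y in ball z ρ, |b y - ballAvg n b z ρ| ≤
        (2*A') * (volume (ball z ρ)).toReal ^ (1+β/(n:ℝ)) := fun z ρ hρ =>
    Stmt5Aux.osc hn hα0 hαn hp1 hq hq0 hq1 hb hA'0 hA' z hρ
  have hcamp := Stmt5Aux.campanato hn hβ0 hb (by linarith : (0:ℝ) ≤ 2*A') hosc c hr
  set g := Stmt5Aux.commFn α b c r with hgdef
  set F : EuclideanSpace ℝ (Fin n) → ℝ := fun x =>
    |b x - V ^ (-(α/(n:ℝ))) * (fracMaxLocal n α (ball c r) b x).toReal| with hFdef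
  -- a.e. pointwise bound
  have hae : ∀ᵐ x ∂(volume.restrict (ball c r)),
      F x ≤ (V ^ (α/(n:ℝ)))⁻¹ * |g x| + CC * (2*A') * V ^ (β/(n:ℝ)) := by
    filter_upwards [hptwise, hcamp] with x hx1 hx2
    calc F x ≤ (V ^ (α/(n:ℝ)))⁻¹ * |g x| + |b x - ballAvg n b c r| := hx1.1
      _ ≤ (V ^ (α/(n:ℝ)))⁻¹ * |g x| + CC * (2*A') * V ^ (β/(n:ℝ)) := by
          rw [hCCdef]
          linarith [hx2]
  -- measurability
  have hFaesm : AEStronglyMeasurable F (volume.restrict (ball c r)) := by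
    have h5 : Measurable (fun x => V ^ (-(α/(n:ℝ))) *
        (fracMaxLocal n α (ball c r) b x).toReal) :=
      (Stmt5Aux.measurable_fracMaxLocal α (ball c r) b).ennreal_toReal.const_mul _
    exact (hb.aestronglyMeasurable.restrict.sub h5.aestronglyMeasurable.restrict).norm
  have hFqaesm : AEStronglyMeasurable (fun x => F x ^ q) (volume.restrict (ball c r)) :=
    (Real.continuous_rpow_const hq0.le).comp_aestronglyMeasurable hFaesm
  -- rewrite the integral as a lintegral
  set Φ := ∫⁻ x in ball c r, (ENNReal.ofReal (F x)) ^ q with hΦdef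
  have hrw : ∫ x in ball c r, F x ^ q ∂volume = Φ.toReal := by
    rw [integral_eq_lintegral_of_nonneg_ae
      (Filter.Eventually.of_forall fun x => Real.rpow_nonneg (abs_nonneg _) q) hFqaesm]
    congr 1
    refine lintegral_congr fun x => ?_
    rw [ENNReal.ofReal_rpow_of_nonneg (abs_nonneg _) hq0.le]
  -- Minkowski
  set uw : EuclideanSpace ℝ (Fin n) → ℝ≥0∞ :=
    fun x => ENNReal.ofReal ((V ^ (α/(n:ℝ)))⁻¹ * |g x|) with huwdef
  set wc : ℝ≥0∞ := ENNReal.ofReal (CC * (2*A') * V ^ (β/(n:ℝ))) with hwcdef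
  have hwc0 : 0 ≤ CC * (2*A') * V ^ (β/(n:ℝ)) := by positivity
  have huw_meas : AEMeasurable uw (volume.restrict (ball c r)) := by
    refine AEMeasurable.ennreal_ofReal ?_
    exact ((Stmt5Aux.commFn_aesm α hb c r).restrict.norm.aemeasurable.const_mul _)
  have hptw2 : ∀ᵐ x ∂(volume.restrict (ball c r)),
      ENNReal.ofReal (F x) ≤ uw x + wc := by
    filter_upwards [hae] with x hx
    calc ENNReal.ofReal (F x) ≤
        ENNReal.ofReal ((V ^ (α/(n:ℝ)))⁻¹ * |g x| + CC * (2*A') * V ^ (β/(n:ℝ))) :=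
          ENNReal.ofReal_le_ofReal hx
      _ = uw x + wc := ENNReal.ofReal_add (by positivity) hwc0
  have hΦ1 : Φ ≤ ∫⁻ x in ball c r, (uw x + wc) ^ q := by
    refine lintegral_mono_ae ?_
    filter_upwards [hptw2] with x hx
    exact ENNReal.rpow_le_rpow hx hq0.le
  have hmink := ENNReal.lintegral_Lp_add_le huw_meas
    (aemeasurable_const (b := wc)) hq1.le
  -- compute/estimate each term
  have hu_term : (∫⁻ x in ball c r, uw x ^ q) ^ (1/q) ≤
      ENNReal.ofReal ((V ^ (α/(n:ℝ)))⁻¹) * (ENNReal.ofReal A' * volume (ball c r) ^ (1/p)) := by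
    have h6 : ∀ x, uw x ^ q =
        (ENNReal.ofReal ((V ^ (α/(n:ℝ)))⁻¹)) ^ q * ((‖g x‖₊ : ℝ≥0∞)) ^ q := by
      intro x
      rw [huwdef]
      simp only
      rw [ENNReal.ofReal_mul (by positivity), ENNReal.mul_rpow_of_nonneg _ _ hq0.le]
      congr 2
      rw [← Real.norm_eq_abs, ofReal_norm]
      rfl
    have h7 : ∫⁻ x in ball c r, uw x ^ q =
        (ENNReal.ofReal ((V ^ (α/(n:ℝ)))⁻¹)) ^ q *
          ∫⁻ x in ball c r, ((‖g x‖₊ : ℝ≥0∞)) ^ q := by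
      rw [lintegral_congr h6]
      exact lintegral_const_mul' _ _
        (ENNReal.rpow_ne_top_of_nonneg hq0.le ENNReal.ofReal_ne_top)
    rw [h7, ENNReal.mul_rpow_of_nonneg _ _ (by positivity : (0:ℝ) ≤ 1/q),
      ← ENNReal.rpow_mul, mul_one_div, div_self hq0.ne', ENNReal.rpow_one]
    refine mul_le_mul_right ?_ _
    calc (∫⁻ x in ball c r, ((‖g x‖₊ : ℝ≥0∞)) ^ q) ^ (1/q)
        ≤ ((ENNReal.ofReal A' * volume (ball c r) ^ (1/p)) ^ q) ^ (1/q) :=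
          ENNReal.rpow_le_rpow hSq (by positivity)
      _ = ENNReal.ofReal A' * volume (ball c r) ^ (1/p) := by
          rw [← ENNReal.rpow_mul, mul_one_div, div_self hq0.ne', ENNReal.rpow_one]
  have hw_term : (∫⁻ _ in ball c r, wc ^ q) ^ (1/q) = wc * volume (ball c r) ^ (1/q) := by
    rw [setLIntegral_const, ENNReal.mul_rpow_of_nonneg _ _ (by positivity : (0:ℝ) ≤ 1/q),
      ← ENNReal.rpow_mul, mul_one_div, div_self hq0.ne', ENNReal.rpow_one]
  -- combine in ℝ≥0∞
  set RHSe : ℝ≥0∞ := ENNReal.ofReal ((V ^ (α/(n:ℝ)))⁻¹) *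
      (ENNReal.ofReal A' * volume (ball c r) ^ (1/p)) +
      wc * volume (ball c r) ^ (1/q) with hRHSedef
  have hΦfin : Φ ^ (1/q) ≤ RHSe := by
    calc Φ ^ (1/q) ≤ (∫⁻ x in ball c r, (uw x + wc) ^ q) ^ (1/q) :=
          ENNReal.rpow_le_rpow hΦ1 (by positivity)
      _ ≤ (∫⁻ x in ball c r, uw x ^ q) ^ (1/q) + (∫⁻ _ in ball c r, wc ^ q) ^ (1/q) := by
          simpa using hmink
      _ ≤ RHSe := by
          rw [hRHSedef, ← hw_term]
          exact add_le_add hu_term le_rfl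
  have hRHSfin : RHSe ≠ ⊤ := by
    rw [hRHSedef]
    refine ENNReal.add_ne_top.2 ⟨?_, ?_⟩
    · exact ENNReal.mul_ne_top ENNReal.ofReal_ne_top
        (ENNReal.mul_ne_top ENNReal.ofReal_ne_top
          (ENNReal.rpow_ne_top_of_nonneg (by positivity) hVt))
    · exact ENNReal.mul_ne_top ENNReal.ofReal_ne_top
        (ENNReal.rpow_ne_top_of_nonneg (by positivity) hVt)
  -- back to the reals
  rw [hrw]
  have hsplit : (V⁻¹ * Φ.toReal) ^ (1/q) = (V ^ (1/q))⁻¹ * (Φ ^ (1/q)).toReal := by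
    rw [Real.mul_rpow (inv_nonneg.2 hV.le) ENNReal.toReal_nonneg,
      Real.inv_rpow hV.le, ENNReal.toReal_rpow, ENNReal.toReal_rpow]
  rw [hsplit]
  have hstep2 : (Φ ^ (1/q)).toReal ≤ RHSe.toReal := ENNReal.toReal_mono hRHSfin hΦfin
  have hRHSval : RHSe.toReal = (V ^ (α/(n:ℝ)))⁻¹ * (A' * V ^ (1/p)) +
      CC * (2*A') * V ^ (β/(n:ℝ)) * V ^ (1/q) := by
    rw [hRHSedef, ENNReal.toReal_add, ENNReal.toReal_mul, ENNReal.toReal_mul,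
      ENNReal.toReal_mul, ENNReal.toReal_ofReal (by positivity),
      ENNReal.toReal_ofReal hA'0, hwcdef, ENNReal.toReal_ofReal hwc0,
      ← ENNReal.toReal_rpow, ← ENNReal.toReal_rpow, ← hVdef]
    · exact ENNReal.mul_ne_top ENNReal.ofReal_ne_top
        (ENNReal.mul_ne_top ENNReal.ofReal_ne_top
          (ENNReal.rpow_ne_top_of_nonneg (by positivity) hVt))
    · exact ENNReal.mul_ne_top ENNReal.ofReal_ne_top
        (ENNReal.rpow_ne_top_of_nonneg (by positivity) hVt)
  have hfinal : (V ^ (1/q))⁻¹ * RHSe.toReal = (A' + CC * (2*A')) * V ^ (β/(n:ℝ)) := by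
    rw [hRHSval]
    have hVq0 : V ^ (1/q) ≠ 0 := (Real.rpow_pos_of_pos hV _).ne'
    have hexp : 1/p + -(α/(n:ℝ)) + -(1/q) = β/(n:ℝ) := by
      have hab : (α+β)/(n:ℝ) = α/(n:ℝ) + β/(n:ℝ) := add_div α β (n:ℝ)
      rw [hq] at *
      linarith [hab]
    have hT1 : (V ^ (1/q))⁻¹ * ((V ^ (α/(n:ℝ)))⁻¹ * (A' * V ^ (1/p))) =
        A' * V ^ (β/(n:ℝ)) := by
      rw [← Real.rpow_neg hV.le, ← Real.rpow_neg hV.le]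
      calc V ^ (-(1/q)) * (V ^ (-(α/(n:ℝ))) * (A' * V ^ (1/p))) =
          A' * (V ^ (1/p) * V ^ (-(α/(n:ℝ))) * V ^ (-(1/q))) := by ring
        _ = A' * V ^ (β/(n:ℝ)) := by
            rw [← Real.rpow_add hV, ← Real.rpow_add hV, hexp]
    have hT2 : (V ^ (1/q))⁻¹ * (CC * (2*A') * V ^ (β/(n:ℝ)) * V ^ (1/q)) =
        CC * (2*A') * V ^ (β/(n:ℝ)) := by
      field_simp
    calc (V ^ (1/q))⁻¹ * ((V ^ (α/(n:ℝ)))⁻¹ * (A' * V ^ (1/p)) +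
          CC * (2*A') * V ^ (β/(n:ℝ)) * V ^ (1/q))
        = (V ^ (1/q))⁻¹ * ((V ^ (α/(n:ℝ)))⁻¹ * (A' * V ^ (1/p))) +
          (V ^ (1/q))⁻¹ * (CC * (2*A') * V ^ (β/(n:ℝ)) * V ^ (1/q)) := by ring
      _ = (A' + CC * (2*A')) * V ^ (β/(n:ℝ)) := by rw [hT1, hT2]; ring
  calc (V ^ (1/q))⁻¹ * (Φ ^ (1/q)).toReal ≤ (V ^ (1/q))⁻¹ * RHSe.toReal :=
        mul_le_mul_of_nonneg_left hstep2 (by positivity)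
    _ = (A' + CC * (2*A')) * V ^ (β/(n:ℝ)) := hfinal
end

section
/- Let n ≥ 1, 0 < β < 1, 0 < α < n with α + β < n. Suppose b : ℝⁿ → ℝ satisfies |b(x) − b(y)| ≤ C₀ |x − y|^β for all x, y ∈ ℝⁿ, and that there exist s ∈ [1, ∞) and a constant C₁ such that for every ball B ⊂ ℝⁿ, (|B|⁻¹ ∫_B | b(x) − |B|^{−α/n} M_{α,B} b(x) |^s dx)^{1/s} ≤ C₁ |B|^{β/n}. Then there is a constant C such that for every ball B ⊂ ℝⁿ, ∫_B | b(x) − M_B b(x) | dx ≤ C |B|^{1 + β/n}. -/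
open MeasureTheory Metric Set
open scoped ENNReal NNReal

/-!
On a ball `B` of radius `r`, a `β`-Hölder function `b` oscillates by at most `K = C₀ (2r)^β`, so
both `M_B b(x)` and the normalised `|B|^{-α/n} M_{α,B} b(x)` lie within `K` of `|b(x)|`. Hence
`|b - M_B b| ≤ |b - |B|^{-α/n} M_{α,B} b| + 2K` on `B`. Integrating, Jensen's inequality bounds the
first term by `C₁ |B|^{1 + β/n}`, and `K |B|` is a multiple of `|B|^{1 + β/n}` since `r^n` is a
multiple of `|B|`.
-/

open Module

section Holder

variable {E : Type*}

lemma continuous_of_abs_sub_le_mul_rpow [SeminormedAddCommGroup E] {f : E → ℝ} {C β : ℝ}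
    (hβ : 0 < β) (hf : ∀ x y, |f x - f y| ≤ C * ‖x - y‖ ^ β) : Continuous f := by
  refine HolderWith.continuous (C := C.toNNReal) (r := β.toNNReal) (fun x y => ?_)
    (by simpa using hβ)
  rw [edist_dist, edist_dist, ENNReal.ofReal_rpow_of_nonneg dist_nonneg (by positivity),
    ← ENNReal.ofReal_coe_nnreal, ← ENNReal.ofReal_mul (by positivity), Real.dist_eq,
    dist_eq_norm, Real.coe_toNNReal', Real.coe_toNNReal _ hβ.le]
  exact ENNReal.ofReal_le_ofReal <|
    (hf x y).trans (mul_le_mul_of_nonneg_right (le_max_left _ _) (by positivity))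

lemma nonneg_of_abs_sub_le_mul_rpow [NormedAddCommGroup E] [Nontrivial E] {f : E → ℝ}
    {C β : ℝ} (hf : ∀ x y, |f x - f y| ≤ C * ‖x - y‖ ^ β) : 0 ≤ C := by
  obtain ⟨x, hx⟩ := exists_ne (0 : E)
  have h := (abs_nonneg _).trans (hf x 0)
  rw [sub_zero] at h
  exact nonneg_of_mul_nonneg_left h (Real.rpow_pos_of_pos (norm_pos_iff.2 hx) β)

lemma abs_sub_le_of_mem_ball [SeminormedAddCommGroup E] {f : E → ℝ} {C β : ℝ} (hC : 0 ≤ C)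
    (hβ : 0 ≤ β) (hf : ∀ x y, |f x - f y| ≤ C * ‖x - y‖ ^ β) {c x y : E} {r : ℝ}
    (hx : x ∈ ball c r) (hy : y ∈ ball c r) : |f y - f x| ≤ C * (2 * r) ^ β := by
  have hyx : ‖y - x‖ ≤ 2 * r := by
    rw [← dist_eq_norm]
    linarith [dist_triangle_right y x c, mem_ball.1 hx, mem_ball.1 hy]
  calc |f y - f x| ≤ C * ‖y - x‖ ^ β := hf y x
    _ ≤ C * (2 * r) ^ β := by gcongr

end Holder

lemma rpow_eq_measure_ball_div {E : Type*} [NormedAddCommGroup E] [NormedSpace ℝ E]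
    [MeasurableSpace E] [BorelSpace E] [FiniteDimensional ℝ E] (μ : Measure E)
    [μ.IsAddHaarMeasure] (hE : finrank ℝ E ≠ 0) (c : E) {r : ℝ} (hr : 0 < r) (β : ℝ) :
    r ^ β = ((μ (ball c r)).toReal / (μ (ball 0 1)).toReal) ^ (β / finrank ℝ E) := by
  have hv : 0 < (μ (ball (0 : E) 1)).toReal :=
    ENNReal.toReal_pos (measure_ball_pos μ _ one_pos).ne' measure_ball_lt_top.ne
  rw [Measure.addHaar_ball_of_pos μ c hr, ENNReal.toReal_mul, ENNReal.toReal_ofReal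
    (by positivity), mul_div_cancel_right₀ _ hv.ne', ← Real.rpow_natCast,
    ← Real.rpow_mul hr.le, mul_div_cancel₀ _ (by exact_mod_cast hE)]

lemma setAverage_abs_le_rpow {α : Type*} [MeasurableSpace α] {μ : Measure α} {t : Set α}
    {f : α → ℝ} {s : ℝ} (hs : 1 ≤ s) (h0 : μ t ≠ 0) (ht : μ t ≠ ∞) (hf : IntegrableOn f t μ)
    (hfs : IntegrableOn (fun x => |f x| ^ s) t μ) :
    ⨍ x in t, |f x| ∂μ ≤ (⨍ x in t, |f x| ^ s ∂μ) ^ (1 / s) := by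
  have hs0 : 0 < s := one_pos.trans_le hs
  have jensen := (convexOn_rpow hs).map_set_average_le
    (continuousOn_id.rpow_const fun _ _ => Or.inr hs0.le) isClosed_Ici h0 ht
    (ae_of_all _ fun x => abs_nonneg (f x)) hf.abs hfs
  rw [one_div, Real.le_rpow_inv_iff_of_pos (by rw [setAverage_eq]; positivity)
    (by rw [setAverage_eq]; positivity) hs0]
  exact jensen

lemma ENNReal.rpow_sub_one_mul {x : ℝ≥0∞} (h0 : x ≠ 0) (htop : x ≠ ⊤) (p : ℝ) :
    x ^ (p - 1) * x = x ^ p := by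
  nth_rw 2 [← ENNReal.rpow_one x]
  rw [← ENNReal.rpow_add _ _ h0 htop, sub_add_cancel]

section FracMaxLocal

variable {n : ℕ} {α : ℝ} {B₀ : Set (EuclideanSpace ℝ (Fin n))}
  {f : EuclideanSpace ℝ (Fin n) → ℝ} {x c : EuclideanSpace ℝ (Fin n)} {r : ℝ}

lemma lowerSemicontinuous_fracMaxLocal : LowerSemicontinuous (fracMaxLocal n α B₀ f) := by
  intro x t ht
  simp only [fracMaxLocal, lt_iSup_iff] at ht
  obtain ⟨c, r, hr, hx, hsub, ht⟩ := ht
  filter_upwards [isOpen_ball.mem_nhds hx] with y hy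
  exact ht.trans_le <| le_iSup_of_le c <| le_iSup_of_le r <| le_iSup_of_le hr <|
    le_iSup_of_le hy <| le_iSup_of_le hsub le_rfl

lemma fracMaxLocal_le (hα : 0 ≤ α) {A : ℝ} (hA : ∀ y ∈ B₀, |f y| ≤ A) :
    fracMaxLocal n α B₀ f x ≤ volume B₀ ^ (α / n) * ENNReal.ofReal A := by
  refine iSup_le fun c => iSup_le fun r => iSup_le fun hr => iSup_le fun _ =>
    iSup_le fun hsub => ?_
  have hint : ∫⁻ y in ball c r, (‖f y‖₊ : ℝ≥0∞) ≤ ∫⁻ _ in ball c r, ENNReal.ofReal A :=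
    setLIntegral_mono' measurableSet_ball fun y hy => by
      rw [← enorm_eq_nnnorm, Real.enorm_eq_ofReal_abs]
      exact ENNReal.ofReal_le_ofReal (hA y (hsub hy))
  calc volume (ball c r) ^ (α / n - 1) * ∫⁻ y in ball c r, (‖f y‖₊ : ℝ≥0∞)
      ≤ volume (ball c r) ^ (α / n - 1) * (volume (ball c r) * ENNReal.ofReal A) := by
        rw [setLIntegral_const, mul_comm _ (volume _)] at hint
        gcongr
    _ = volume (ball c r) ^ (α / n) * ENNReal.ofReal A := by
        rw [← mul_assoc, ENNReal.rpow_sub_one_mul (measure_ball_pos _ c hr).ne'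
          measure_ball_lt_top.ne]
    _ ≤ volume B₀ ^ (α / n) * ENNReal.ofReal A := by
        gcongr

lemma le_fracMaxLocal_ball (hr : 0 < r) (hx : x ∈ ball c r) {A : ℝ}
    (hA : ∀ y ∈ ball c r, A ≤ |f y|) :
    volume (ball c r) ^ (α / n) * ENNReal.ofReal A ≤ fracMaxLocal n α (ball c r) f x := by
  have hint : ∫⁻ _ in ball c r, ENNReal.ofReal A ≤ ∫⁻ y in ball c r, (‖f y‖₊ : ℝ≥0∞) :=
    setLIntegral_mono' measurableSet_ball fun y hy => by
      rw [← enorm_eq_nnnorm, Real.enorm_eq_ofReal_abs]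
      exact ENNReal.ofReal_le_ofReal (hA y hy)
  rw [setLIntegral_const, mul_comm] at hint
  calc volume (ball c r) ^ (α / n) * ENNReal.ofReal A
      = volume (ball c r) ^ (α / n - 1) * (volume (ball c r) * ENNReal.ofReal A) := by
        rw [← mul_assoc, ENNReal.rpow_sub_one_mul (measure_ball_pos _ c hr).ne'
          measure_ball_lt_top.ne]
    _ ≤ volume (ball c r) ^ (α / n - 1) * ∫⁻ y in ball c r, (‖f y‖₊ : ℝ≥0∞) := by gcongr
    _ ≤ fracMaxLocal n α (ball c r) f x :=
        le_iSup_of_le c <| le_iSup_of_le r <| le_iSup_of_le hr <| le_iSup_of_le hx <|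
          le_iSup_of_le subset_rfl le_rfl

lemma abs_rpow_mul_fracMaxLocal_sub_abs_le (hα : 0 ≤ α) (hr : 0 < r) (hx : x ∈ ball c r)
    {K : ℝ} (hosc : ∀ y ∈ ball c r, |f y - f x| ≤ K) :
    |(volume (ball c r)).toReal ^ (-(α / n)) * (fracMaxLocal n α (ball c r) f x).toReal
      - (|f x|)| ≤ K := by
  have hV0 : volume (ball c r) ≠ 0 := (measure_ball_pos _ c hr).ne'
  have hVtop : volume (ball c r) ≠ ⊤ := measure_ball_lt_top.ne
  have hK : 0 ≤ K := (abs_nonneg _).trans (hosc x hx)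
  have hu : 0 < (volume (ball c r)).toReal ^ (α / n) :=
    Real.rpow_pos_of_pos (ENNReal.toReal_pos hV0 hVtop) _
  have hup := fracMaxLocal_le hα (B₀ := ball c r) (f := f) (x := x) (A := |f x| + K)
    fun y hy => by
      linarith [abs_sub_abs_le_abs_sub (f y) (f x), hosc y hy]
  have hlow := le_fracMaxLocal_ball (α := α) (f := f) hr hx (A := |f x| - K) fun y hy => by
    linarith [abs_sub_abs_le_abs_sub (f x) (f y), abs_sub_comm (f x) (f y), hosc y hy]
  have hne : fracMaxLocal n α (ball c r) f x ≠ ⊤ :=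
    ne_top_of_le_ne_top (by finiteness) hup
  replace hup := ENNReal.toReal_mono (by finiteness) hup
  replace hlow := ENNReal.toReal_mono hne hlow
  rw [ENNReal.toReal_mul, ← ENNReal.toReal_rpow, ENNReal.toReal_ofReal (by positivity)] at hup
  rw [ENNReal.toReal_mul, ← ENNReal.toReal_rpow, ENNReal.toReal_ofReal'] at hlow
  rw [Real.rpow_neg ENNReal.toReal_nonneg, abs_sub_le_iff]
  constructor
  · rw [sub_le_iff_le_add', inv_mul_le_iff₀ hu]
    exact hup
  · rw [sub_le_comm, le_inv_mul_iff₀ hu]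
    exact (mul_le_mul_of_nonneg_left (le_max_left _ _) hu.le).trans hlow

lemma abs_sub_fracMaxLocal_zero_le (hα : 0 ≤ α) (hr : 0 < r) (hx : x ∈ ball c r) {K : ℝ}
    (hosc : ∀ y ∈ ball c r, |f y - f x| ≤ K) :
    |f x - (fracMaxLocal n 0 (ball c r) f x).toReal| ≤
      |f x - (volume (ball c r)).toReal ^ (-(α / n)) * (fracMaxLocal n α (ball c r) f x).toReal|
        + 2 * K := by
  set E := (volume (ball c r)).toReal ^ (-(α / n)) * (fracMaxLocal n α (ball c r) f x).toReal
  set M := (fracMaxLocal n 0 (ball c r) f x).toReal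
  have hE : |E - (|f x|)| ≤ K := abs_rpow_mul_fracMaxLocal_sub_abs_le hα hr hx hosc
  have hM : |M - (|f x|)| ≤ K := by
    simpa using abs_rpow_mul_fracMaxLocal_sub_abs_le (α := 0) le_rfl hr hx hosc
  calc |f x - M| ≤ |f x - E| + |E - M| := abs_sub_le _ _ _
    _ ≤ |f x - E| + (|E - (|f x|)| + |(|f x|) - M|) := by grw [abs_sub_le E (|f x|) M]
    _ ≤ |f x - E| + 2 * K := by linarith [abs_sub_comm (|f x|) M]

end FracMaxLocal

lemma integral_abs_sub_fracMaxLocal_zero_le {n : ℕ} {α s K r : ℝ}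
    {f : EuclideanSpace ℝ (Fin n) → ℝ} {c : EuclideanSpace ℝ (Fin n)} (hα : 0 ≤ α) (hs : 1 ≤ s)
    (hf : Continuous f) (hr : 0 < r)
    (hosc : ∀ x ∈ ball c r, ∀ y ∈ ball c r, |f y - f x| ≤ K) :
    ∫ x in ball c r, |f x - (fracMaxLocal n 0 (ball c r) f x).toReal| ≤
      (volume (ball c r)).toReal * ((volume (ball c r)).toReal⁻¹ *
          ∫ x in ball c r, |f x - (volume (ball c r)).toReal ^ (-(α / n)) *
            (fracMaxLocal n α (ball c r) f x).toReal| ^ s) ^ (1 / s) +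
        2 * K * (volume (ball c r)).toReal := by
  have hV0 : volume (ball c r) ≠ 0 := (measure_ball_pos _ c hr).ne'
  have hVtop : volume (ball c r) ≠ ⊤ := measure_ball_lt_top.ne
  set V := (volume (ball c r)).toReal
  have hV : 0 < V := ENNReal.toReal_pos hV0 hVtop
  set E := fun x => V ^ (-(α / n)) * (fracMaxLocal n α (ball c r) f x).toReal
  set g := fun x => f x - E x
  have hpt : ∀ x ∈ ball c r,
      |f x - (fracMaxLocal n 0 (ball c r) f x).toReal| ≤ |g x| + 2 * K :=
    fun x hx => abs_sub_fracMaxLocal_zero_le hα hr hx (hosc x hx)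
  have hbdd : ∀ x ∈ ball c r, |g x| ≤ 2 * |f c| + 3 * K := fun x hx => by
    have hEx := abs_le.1 (abs_rpow_mul_fracMaxLocal_sub_abs_le hα hr hx (hosc x hx))
    have hEx' : |E x| ≤ |f x| + K := abs_le.2 ⟨by linarith [abs_nonneg (f x)], by linarith⟩
    calc |g x| ≤ |f x| + |E x| := abs_sub _ _
      _ ≤ 2 * |f c| + 3 * K := by
        linarith [abs_sub_abs_le_abs_sub (f x) (f c), hosc c (mem_ball_self hr) x hx]
  have hs0 : 0 < s := one_pos.trans_le hs
  have hgm : Measurable g := hf.measurable.sub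
    (measurable_const.mul lowerSemicontinuous_fracMaxLocal.measurable.ennreal_toReal)
  have hgi : IntegrableOn g (ball c r) := Measure.integrableOn_of_bounded hVtop
    hgm.aestronglyMeasurable (ae_restrict_of_forall_mem measurableSet_ball hbdd)
  have hgsi : IntegrableOn (fun x => |g x| ^ s) (ball c r) :=
    Measure.integrableOn_of_bounded hVtop (hgm.abs.pow_const s).aestronglyMeasurable
      (ae_restrict_of_forall_mem measurableSet_ball fun x hx => by
        rw [Real.norm_of_nonneg (by positivity)]
        exact Real.rpow_le_rpow (abs_nonneg _) (hbdd x hx) hs0.le)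
  calc ∫ x in ball c r, |f x - (fracMaxLocal n 0 (ball c r) f x).toReal|
      ≤ ∫ x in ball c r, (|g x| + 2 * K) :=
        integral_mono_of_nonneg (ae_of_all _ fun _ => abs_nonneg _)
          (hgi.abs.add (integrableOn_const hVtop))
          (ae_restrict_of_forall_mem measurableSet_ball hpt)
    _ = V * (⨍ x in ball c r, |g x|) + 2 * K * V := by
        rw [integral_add hgi.abs (integrableOn_const hVtop), setIntegral_const, smul_eq_mul,
          measureReal_def, setAverage_eq, smul_eq_mul, measureReal_def,
          mul_inv_cancel_left₀ hV.ne', mul_comm V]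
    _ ≤ V * (⨍ x in ball c r, |g x| ^ s) ^ (1 / s) + 2 * K * V :=
        add_le_add_left (mul_le_mul_of_nonneg_left
          (setAverage_abs_le_rpow hs hV0 hVtop hgi hgsi) hV.le) _
    _ = _ := by rw [setAverage_eq, smul_eq_mul, measureReal_def]

theorem stmt12_general (n : ℕ) (hn : 1 ≤ n) (α β : ℝ) (hβ0 : 0 < β)
    (hα0 : 0 < α)
    (b : EuclideanSpace ℝ (Fin n) → ℝ) (C₀ : ℝ)
    (hb : ∀ x y, |b x - b y| ≤ C₀ * ‖x - y‖ ^ β)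
    (s : ℝ) (hs : 1 ≤ s) (C₁ : ℝ)
    (hC₁ : ∀ (c : EuclideanSpace ℝ (Fin n)) (r : ℝ), 0 < r →
      ((volume (ball c r)).toReal⁻¹ *
          ∫ x in ball c r,
            |b x - (volume (ball c r)).toReal ^ (-(α / n)) *
              (fracMaxLocal n α (ball c r) b x).toReal| ^ s) ^ (1 / s) ≤
        C₁ * (volume (ball c r)).toReal ^ (β / n)) :
    ∃ C : ℝ, ∀ (c : EuclideanSpace ℝ (Fin n)) (r : ℝ), 0 < r →
      (∫ x in ball c r,
          |b x - (fracMaxLocal n 0 (ball c r) b x).toReal|) ≤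
        C * (volume (ball c r)).toReal ^ (1 + β / n) := by
  have : Nontrivial (EuclideanSpace ℝ (Fin n)) := by
    have : Nonempty (Fin n) := ⟨⟨0, hn⟩⟩
    infer_instance
  have hC₀ : 0 ≤ C₀ := nonneg_of_abs_sub_le_mul_rpow hb
  set v := (volume (ball (0 : EuclideanSpace ℝ (Fin n)) 1)).toReal
  refine ⟨C₁ + 2 * C₀ * 2 ^ β / v ^ (β / n), fun c r hr => ?_⟩
  set V := (volume (ball c r)).toReal
  have hV : 0 < V := ENNReal.toReal_pos (measure_ball_pos _ c hr).ne' measure_ball_lt_top.ne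
  have hv : 0 < v := ENNReal.toReal_pos (measure_ball_pos _ _ one_pos).ne' measure_ball_lt_top.ne
  have hrβ : r ^ β = (V / v) ^ (β / n) := by
    have h := rpow_eq_measure_ball_div volume (by rw [finrank_euclideanSpace_fin]; omega) c hr β
    rwa [finrank_euclideanSpace_fin] at h
  calc _ ≤ V * (V⁻¹ * ∫ x in ball c r, |b x - V ^ (-(α / n)) *
          (fracMaxLocal n α (ball c r) b x).toReal| ^ s) ^ (1 / s) + 2 * (C₀ * (2 * r) ^ β) * V :=
        integral_abs_sub_fracMaxLocal_zero_le hα0.le hs (continuous_of_abs_sub_le_mul_rpow hβ0 hb)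
          hr fun x hx y hy => abs_sub_le_of_mem_ball hC₀ hβ0.le hb hx hy
    _ ≤ V * (C₁ * V ^ (β / n)) + 2 * (C₀ * (2 * r) ^ β) * V := by
        gcongr
        exact hC₁ c r hr
    _ = (C₁ + 2 * C₀ * 2 ^ β / v ^ (β / n)) * V ^ (1 + β / n) := by
        rw [Real.mul_rpow zero_le_two hr.le, hrβ, Real.div_rpow hV.le hv.le, Real.rpow_add hV,
          Real.rpow_one]
        field_simp

/-- if `b ∈ Λ̇_β` with constant `C₀` and for some `s ∈ [1, ∞)` one has
`(|B|⁻¹ ∫_B |b(x) - |B|^{-α/n} M_{α,B} b(x)|^s dx)^{1/s} ≤ C₁ |B|^{β/n}` for every ball,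
then `∫_B |b(x) - M_B b(x)| dx ≤ C |B|^{1 + β/n}` for every ball `B`. -/
theorem stmt12 (n : ℕ) (hn : 1 ≤ n) (α β : ℝ) (hβ0 : 0 < β) (hβ1 : β < 1)
    (hα0 : 0 < α) (hαn : α < n) (hαβn : α + β < n)
    (b : EuclideanSpace ℝ (Fin n) → ℝ) (C₀ : ℝ)
    (hb : ∀ x y, |b x - b y| ≤ C₀ * ‖x - y‖ ^ β)
    (s : ℝ) (hs : 1 ≤ s) (C₁ : ℝ)
    (hC₁ : ∀ (c : EuclideanSpace ℝ (Fin n)) (r : ℝ), 0 < r →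
      ((volume (ball c r)).toReal⁻¹ *
          ∫ x in ball c r,
            |b x - (volume (ball c r)).toReal ^ (-(α / n)) *
              (fracMaxLocal n α (ball c r) b x).toReal| ^ s) ^ (1 / s) ≤
        C₁ * (volume (ball c r)).toReal ^ (β / n)) :
    ∃ C : ℝ, ∀ (c : EuclideanSpace ℝ (Fin n)) (r : ℝ), 0 < r →
      (∫ x in ball c r,
          |b x - (fracMaxLocal n 0 (ball c r) b x).toReal|) ≤
        C * (volume (ball c r)).toReal ^ (1 + β / n) :=
  stmt12_general n hn α β hβ0 hα0 b C₀ hb s hs C₁ hC₁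
end

section
/- Let n ≥ 1, 0 < α < n, 1 < p < n/α and 1/q = 1/p − α/n. Then there is a constant C (depending only on n, α, p) such that for every f ∈ L^p(ℝⁿ), ‖M_α f‖_{L^q(ℝⁿ)} ≤ C ‖f‖_{L^p(ℝⁿ)}. -/
open MeasureTheory Metric Set
open scoped ENNReal NNReal

namespace Stmt16Aux

variable {n : ℕ}

local notation "Eu" => EuclideanSpace ℝ (Fin n)

/-- The uncentered Hardy-Littlewood maximal function of an `ℝ≥0∞`-valued function. -/
noncomputable def Mx (n : ℕ) (g : EuclideanSpace ℝ (Fin n) → ℝ≥0∞)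
    (x : EuclideanSpace ℝ (Fin n)) : ℝ≥0∞ :=
  ⨆ (c : EuclideanSpace ℝ (Fin n)) (r : ℝ) (_ : 0 < r) (_ : x ∈ ball c r),
    (volume (ball c r))⁻¹ * ∫⁻ y in ball c r, g y

lemma vol_ball_pos (c : Eu) {r : ℝ} (hr : 0 < r) : 0 < volume (ball c r) :=
  measure_ball_pos _ _ hr

lemma vol_ball_lt_top (c : Eu) (r : ℝ) : volume (ball c r) < ∞ :=
  measure_ball_lt_top

lemma term_le_Mx {g : Eu → ℝ≥0∞} {x c : Eu} {r : ℝ} (hr : 0 < r) (hx : x ∈ ball c r) :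
    (volume (ball c r))⁻¹ * ∫⁻ y in ball c r, g y ≤ Mx n g x := by
  refine le_trans ?_ (le_iSup _ c)
  refine le_trans ?_ (le_iSup _ r)
  refine le_trans ?_ (le_iSup _ hr)
  exact le_iSup (fun _ : x ∈ ball c r => (volume (ball c r))⁻¹ * ∫⁻ y in ball c r, g y) hx

lemma lt_Mx_iff {g : Eu → ℝ≥0∞} {x : Eu} {l : ℝ≥0∞} :
    l < Mx n g x ↔ ∃ c r, 0 < r ∧ x ∈ ball c r ∧
      l < (volume (ball c r))⁻¹ * ∫⁻ y in ball c r, g y := by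
  simp only [Mx, lt_iSup_iff]
  constructor
  · rintro ⟨c, r, hr, hx, h⟩; exact ⟨c, r, hr, hx, h⟩
  · rintro ⟨c, r, hr, hx, h⟩; exact ⟨c, r, hr, hx, h⟩

lemma isOpen_Mx_gt (g : Eu → ℝ≥0∞) (l : ℝ≥0∞) : IsOpen {x : Eu | l < Mx n g x} := by
  rw [isOpen_iff_forall_mem_open]
  intro x hx
  obtain ⟨c, r, hr, hxb, h⟩ := lt_Mx_iff.1 hx
  exact ⟨ball c r, fun y hy => lt_Mx_iff.2 ⟨c, r, hr, hy, h⟩, isOpen_ball, hxb⟩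

lemma measurable_Mx (g : Eu → ℝ≥0∞) : Measurable (Mx n g) :=
  measurable_of_Ioi fun l => (isOpen_Mx_gt g l).measurableSet

lemma Mx_congr_ae {g g' : Eu → ℝ≥0∞} (h : g =ᵐ[volume] g') : Mx n g = Mx n g' := by
  ext x
  unfold Mx
  congr 1; ext c; congr 1; ext r; congr 1; ext hr; congr 1; ext hx
  congr 1
  exact lintegral_congr_ae (ae_restrict_of_ae h)



lemma ball_vol_closedBall (hn : n ≠ 0) (c : Eu) (r : ℝ) :
    volume (closedBall c (4 * r)) = ENNReal.ofReal (4 ^ n) * volume (ball c r) := by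
  haveI : Nonempty (Fin n) := Fin.pos_iff_nonempty.1 (Nat.pos_of_ne_zero hn)
  rw [Measure.addHaar_closedBall_mul_of_pos _ _ (by norm_num : (0:ℝ) < 4),
    Measure.addHaar_closedBall_eq_addHaar_ball, ← Measure.addHaar_ball_center volume c,
    finrank_euclideanSpace_fin]

/-- Weak (1,1) inequality for the uncentered maximal function. -/
theorem weak (hn : n ≠ 0) (g : Eu → ℝ≥0∞) (l : ℝ≥0∞) :
    volume {x : Eu | l < Mx n g x} ≤
      ENNReal.ofReal (4 ^ n) * l⁻¹ * ∫⁻ y, g y := by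
  set I := ∫⁻ y, g y with hI
  -- trivial case : l = ∞
  rcases eq_or_ne l ∞ with rfl | hltop
  · simp
  -- trivial case : I = 0
  rcases eq_or_ne I 0 with hI0 | hIne0
  · have hM : ∀ x : Eu, Mx n g x = 0 := by
      intro x
      unfold Mx
      simp only [ENNReal.iSup_eq_zero]
      intro c r hr hx
      have : ∫⁻ y in ball c r, g y ≤ I := by
        exact lintegral_mono' Measure.restrict_le_self le_rfl
      rw [hI0] at this
      simp [le_antisymm this zero_le]
    have : {x : Eu | l < Mx n g x} = ∅ := by
      ext x; simp [hM x]
    simp [this]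
  -- trivial case : I = ∞
  rcases eq_or_ne I ∞ with hItop | hItop
  · rw [hItop]
    rw [ENNReal.mul_top]
    · exact le_top
    · intro h
      rcases mul_eq_zero.1 h with h4 | hl
      · exact absurd h4 (by positivity)
      · exact absurd hl (by simp [hltop])
  -- trivial case : l = 0
  rcases eq_or_ne l 0 with rfl | hl0
  · simp only [ENNReal.inv_zero]
    rw [ENNReal.mul_top (by positivity), ENNReal.top_mul hIne0]
    exact le_top
  -- main case
  have v₀pos : 0 < volume (ball (0:Eu) 1) := measure_ball_pos _ _ one_pos
  have v₀top : volume (ball (0:Eu) 1) < ∞ := measure_ball_lt_top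
  set t : Set (Eu × ℝ) :=
    {p | 0 < p.2 ∧ l * volume (ball p.1 p.2) < ∫⁻ y in ball p.1 p.2, g y} with ht
  -- covering property
  have cover : ∀ x ∈ {x : Eu | l < Mx n g x}, ∃ p ∈ t, x ∈ ball p.1 p.2 := by
    intro x hx
    obtain ⟨c, r, hr, hxb, h⟩ := lt_Mx_iff.1 hx
    refine ⟨(c, r), ⟨hr, ?_⟩, hxb⟩
    rw [← ENNReal.div_eq_inv_mul] at h
    exact (ENNReal.lt_div_iff_mul_lt (Or.inl (measure_ball_pos volume c hr).ne')
      (Or.inl measure_ball_lt_top.ne)).1 h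
  -- bounded radii
  set K : ℝ≥0∞ := I / (l * volume (ball (0:Eu) 1)) with hK
  have hKtop : K ≠ ∞ := by
    apply (ENNReal.div_lt_top hItop ?_).ne
    exact mul_ne_zero hl0 v₀pos.ne'
  have hR : ∀ p ∈ t, p.2 ≤ max 1 K.toReal := by
    rintro ⟨c, r⟩ ⟨hr, hlt⟩
    have hJI : ∫⁻ y in ball c r, g y ≤ I := lintegral_mono' Measure.restrict_le_self le_rfl
    have h1 : l * (ENNReal.ofReal (r ^ n) * volume (ball (0:Eu) 1)) ≤ I := by
      have h := hlt.le.trans hJI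
      rwa [Measure.addHaar_ball_of_pos volume c hr, finrank_euclideanSpace_fin] at h
    have h2 : ENNReal.ofReal (r ^ n) ≤ K := by
      rw [hK, ENNReal.le_div_iff_mul_le (Or.inl (mul_ne_zero hl0 v₀pos.ne'))
        (Or.inl (ENNReal.mul_ne_top hltop v₀top.ne))]
      calc ENNReal.ofReal (r ^ n) * (l * volume (ball (0:Eu) 1))
          = l * (ENNReal.ofReal (r ^ n) * volume (ball (0:Eu) 1)) := by ring
        _ ≤ I := h1
    have h3 : r ^ n ≤ K.toReal := (ENNReal.ofReal_le_iff_le_toReal hKtop).1 h2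
    rcases le_or_gt r 1 with h | h
    · exact h.trans (le_max_left _ _)
    · exact le_trans (le_trans (le_self_pow₀ h.le hn) h3) (le_max_right _ _)
  -- Vitali
  obtain ⟨u, hut, hdisj, hcov⟩ :=
    Vitali.exists_disjoint_subfamily_covering_enlargement_closedBall t
      (fun p : Eu × ℝ => p.1) (fun p => p.2) (max 1 K.toReal) hR 4 (by norm_num)
  have hdisjb : u.PairwiseDisjoint fun p : Eu × ℝ => ball p.1 p.2 :=
    hdisj.mono fun p => ball_subset_closedBall
  have hcount : u.Countable :=
    hdisjb.countable_of_isOpen (fun p _ => isOpen_ball)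
      (fun p hp => nonempty_ball.2 (hut hp).1)
  -- the set is covered by the enlarged balls
  have hSsub : {x : Eu | l < Mx n g x} ⊆ ⋃ b ∈ u, closedBall b.1 (4 * b.2) := by
    intro x hx
    obtain ⟨p, hpt, hxp⟩ := cover x hx
    obtain ⟨b, hbu, hsub⟩ := hcov p hpt
    exact mem_biUnion hbu (hsub (ball_subset_closedBall hxp))
  haveI := hcount.to_subtype
  have key : ∀ p ∈ t, volume (ball (p : Eu × ℝ).1 p.2) ≤ l⁻¹ * ∫⁻ y in ball p.1 p.2, g y := by
    rintro ⟨c, r⟩ ⟨hr, hlt⟩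
    calc volume (ball c r) = l⁻¹ * (l * volume (ball c r)) := by
          rw [← mul_assoc, ENNReal.inv_mul_cancel hl0 hltop, one_mul]
      _ ≤ l⁻¹ * ∫⁻ y in ball c r, g y := mul_le_mul_right hlt.le _
  have sumbound : ∑' b : u, ∫⁻ y in ball (b : Eu × ℝ).1 (b : Eu × ℝ).2, g y ≤ I := by
    have hpw : Pairwise (Function.onFun Disjoint fun b : u => ball (b : Eu × ℝ).1 (b : Eu × ℝ).2) :=
      hdisjb.subtype _ _
    calc ∑' b : u, ∫⁻ y in ball (b : Eu × ℝ).1 (b : Eu × ℝ).2, g y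
        = ∫⁻ y, g y ∂(Measure.sum fun b : u => volume.restrict (ball (b : Eu × ℝ).1 (b : Eu × ℝ).2)) :=
          (lintegral_sum_measure _ _).symm
      _ = ∫⁻ y, g y ∂(volume.restrict (⋃ b : u, ball (b : Eu × ℝ).1 (b : Eu × ℝ).2)) := by
          rw [Measure.restrict_iUnion hpw (fun b => measurableSet_ball)]
      _ ≤ I := lintegral_mono' Measure.restrict_le_self le_rfl
  calc volume {x : Eu | l < Mx n g x}
      ≤ ∑' b : u, volume (closedBall (b : Eu × ℝ).1 (4 * (b : Eu × ℝ).2)) :=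
        (measure_mono hSsub).trans (measure_biUnion_le volume hcount _)
    _ = ∑' b : u, ENNReal.ofReal (4 ^ n) * volume (ball (b : Eu × ℝ).1 (b : Eu × ℝ).2) := by
        congr 1; ext b; rw [ball_vol_closedBall hn]
    _ ≤ ∑' b : u, ENNReal.ofReal (4 ^ n) * (l⁻¹ * ∫⁻ y in ball (b : Eu × ℝ).1 (b : Eu × ℝ).2, g y) := by
        apply ENNReal.tsum_le_tsum
        intro b
        exact mul_le_mul_right (key b (hut b.2)) _
    _ = ENNReal.ofReal (4 ^ n) * l⁻¹ *
          ∑' b : u, ∫⁻ y in ball (b : Eu × ℝ).1 (b : Eu × ℝ).2, g y := by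
        rw [← ENNReal.tsum_mul_left]; simp [mul_assoc]
    _ ≤ ENNReal.ofReal (4 ^ n) * l⁻¹ * I := mul_le_mul_right sumbound _


/-- Splitting estimate: `M g ≤ M (g·1_{g>t}) + t`. -/
lemma Mx_split {g : Eu → ℝ≥0∞} (hg : Measurable g) (t : ℝ≥0∞) (x : Eu) :
    Mx n g x ≤ Mx n ({y | t < g y}.indicator g) x + t := by
  set g₁ := ({y | t < g y}.indicator g) with hg₁
  have hg₁m : Measurable g₁ := hg.indicator (measurableSet_lt measurable_const hg)
  apply iSup_le; intro c; apply iSup_le; intro r; apply iSup_le; intro hr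
  apply iSup_le; intro hx
  have hV0 : volume (ball c r) ≠ 0 := (measure_ball_pos volume c hr).ne'
  have hVt : volume (ball c r) ≠ ∞ := measure_ball_lt_top.ne
  have hpt : ∀ y, g y ≤ g₁ y + t := by
    intro y
    by_cases h : t < g y
    · simp [hg₁, indicator_of_mem, h]
    · push_neg at h
      exact h.trans (le_add_self)
  calc (volume (ball c r))⁻¹ * ∫⁻ y in ball c r, g y
      ≤ (volume (ball c r))⁻¹ * ∫⁻ y in ball c r, (g₁ y + t) := by
        exact mul_le_mul_right (lintegral_mono hpt) _
    _ = (volume (ball c r))⁻¹ * ((∫⁻ y in ball c r, g₁ y) + t * volume (ball c r)) := by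
        rw [lintegral_add_left hg₁m, setLIntegral_const]
    _ = (volume (ball c r))⁻¹ * (∫⁻ y in ball c r, g₁ y) + t := by
        rw [mul_add]
        congr 1
        rw [mul_comm t, ← mul_assoc, ENNReal.inv_mul_cancel hV0 hVt, one_mul]
    _ ≤ Mx n g₁ x + t := add_le_add_left (term_le_Mx hr hx) t

lemma Mx_gt_subset {g : Eu → ℝ≥0∞} (hg : Measurable g) {t : ℝ≥0∞} (ht : t ≠ ∞) :
    {x : Eu | 2 * t < Mx n g x} ⊆ {x : Eu | t < Mx n ({y | t < g y}.indicator g) x} := by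
  intro x hx
  by_contra hc
  simp only [mem_setOf_eq, not_lt] at hc
  have := (Mx_split hg t x).trans (add_le_add_left hc t)
  rw [← two_mul] at this
  exact absurd (lt_of_lt_of_le hx this) (lt_irrefl _)


/-- The constant in the strong (p,p) inequality. -/
noncomputable def Cs (n : ℕ) (p : ℝ) : ℝ≥0∞ :=
  ENNReal.ofReal p * ENNReal.ofReal (4 ^ n) * 2 * (ENNReal.ofReal (p - 1))⁻¹ *
    ENNReal.ofReal (2 ^ (p - 1))

lemma Cs_ne_zero {p : ℝ} (hp : 1 < p) : Cs n p ≠ 0 := by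
  have h1 : (0:ℝ) < p := lt_trans one_pos hp
  have h2 : (0:ℝ) < p - 1 := by linarith
  have h4 : (0:ℝ) < 4 ^ n := by positivity
  have h5 : (0:ℝ) < 2 ^ (p - 1) := by positivity
  unfold Cs
  refine mul_ne_zero (mul_ne_zero (mul_ne_zero (mul_ne_zero ?_ ?_) ?_) ?_) ?_
  · simp [ENNReal.ofReal_eq_zero, not_le, h1]
  · simp [ENNReal.ofReal_eq_zero, not_le, h4]
  · norm_num
  · simp [ENNReal.inv_eq_zero]
  · simp [ENNReal.ofReal_eq_zero, not_le, h5]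

lemma Cs_ne_top {p : ℝ} (hp : 1 < p) : Cs n p ≠ ∞ := by
  have h2 : (0:ℝ) < p - 1 := by linarith
  unfold Cs
  refine ENNReal.mul_ne_top (ENNReal.mul_ne_top (ENNReal.mul_ne_top (ENNReal.mul_ne_top
    ENNReal.ofReal_ne_top ENNReal.ofReal_ne_top) (by norm_num)) ?_) ENNReal.ofReal_ne_top
  rw [ne_eq, ENNReal.inv_eq_top, ENNReal.ofReal_eq_zero]
  push_neg
  linarith

/-- Strong (p,p) inequality for the uncentered maximal function. -/
theorem strong (hn : n ≠ 0) {p : ℝ} (hp : 1 < p) (g : Eu → ℝ≥0∞) (hg : Measurable g) :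
    ∫⁻ x, Mx n g x ^ p ≤ Cs n p * ∫⁻ x, g x ^ p := by
  have hp0 : (0:ℝ) < p := lt_trans one_pos hp
  have hp1 : (0:ℝ) < p - 1 := by linarith
  set Ip := ∫⁻ x, g x ^ p with hIp
  rcases eq_or_ne Ip ∞ with hItop | hItop
  · rw [hItop, ENNReal.mul_top (Cs_ne_zero hp)]; exact le_top
  -- g is a.e. finite
  have hmsinf : MeasurableSet {y : Eu | g y = ∞} := hg (measurableSet_singleton ⊤)
  have hgfin : volume {y : Eu | g y = ∞} = 0 := by
    by_contra hv
    have hle : ∫⁻ y in {y : Eu | g y = ∞}, g y ^ p ≤ Ip :=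
      lintegral_mono' Measure.restrict_le_self le_rfl
    have heq : ∫⁻ y in {y : Eu | g y = ∞}, g y ^ p
        = ∞ * volume {y : Eu | g y = ∞} := by
      rw [← setLIntegral_const]
      apply setLIntegral_congr_fun hmsinf
      exact fun y hy => by
        rw [mem_setOf_eq] at hy; rw [hy, ENNReal.top_rpow_of_pos hp0]
    rw [heq, ENNReal.top_mul hv] at hle
    exact hItop (top_le_iff.1 hle)
  set ν := volume.withDensity g with hν
  set h : Eu → ℝ := fun y => 2 * (g y).toReal with hh
  have hhm : Measurable h := (hg.ennreal_toReal).const_mul 2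
  have hνinf : ν {y : Eu | g y = ∞} = 0 := by
    rw [hν, withDensity_apply _ hmsinf]
    exact setLIntegral_measure_zero _ _ hgfin
  -- distribution bound
  have distrib : ∀ t : ℝ, 0 < t →
      volume {x : Eu | ENNReal.ofReal t < Mx n g x} ≤
        ENNReal.ofReal (4 ^ n) * (ENNReal.ofReal (t / 2))⁻¹ *
          ν {y : Eu | ENNReal.ofReal (t / 2) < g y} := by
    intro t ht
    set s := ENNReal.ofReal (t / 2) with hs
    have hset : MeasurableSet {y : Eu | s < g y} := measurableSet_lt measurable_const hg
    have h2s : ENNReal.ofReal t = 2 * s := by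
      have h22 : (2:ℝ≥0∞) = ENNReal.ofReal 2 := by simp
      rw [hs, h22, ← ENNReal.ofReal_mul (by norm_num)]
      congr 1
      ring
    have hsub := Mx_gt_subset (g := g) hg (t := s) ENNReal.ofReal_ne_top
    calc volume {x : Eu | ENNReal.ofReal t < Mx n g x}
        ≤ volume {x : Eu | s < Mx n ({y | s < g y}.indicator g) x} := by
          rw [h2s]; exact measure_mono hsub
      _ ≤ ENNReal.ofReal (4 ^ n) * s⁻¹ * ∫⁻ y, ({y | s < g y}.indicator g) y :=
          weak hn _ s
      _ = ENNReal.ofReal (4 ^ n) * s⁻¹ * ν {y : Eu | s < g y} := by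
          rw [lintegral_indicator hset, hν, withDensity_apply _ hset]
  -- bound ν {s < g} by Ip
  have nubound : ∀ s : ℝ≥0∞, s ≠ 0 → s ≠ ∞ → ν {y : Eu | s < g y} ≤ s ^ (1 - p) * Ip := by
    intro s hs0 hst
    have hset : MeasurableSet {y : Eu | s < g y} := measurableSet_lt measurable_const hg
    have hpt : ∀ y ∈ {y : Eu | s < g y}, g y ≤ s ^ (1 - p) * g y ^ p := by
      intro y hy
      rw [mem_setOf_eq] at hy
      rcases eq_or_ne (g y) ∞ with hgy | hgy
      · have h0 : s ^ (1 - p) ≠ 0 := by simp [ENNReal.rpow_eq_zero_iff, hs0, hst]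
        rw [hgy, ENNReal.top_rpow_of_pos hp0, ENNReal.mul_top h0]
      · have hgy0 : g y ≠ 0 := by intro h0; rw [h0] at hy; exact absurd hy (by simp)
        have hsplit : g y = g y ^ (1 - p) * g y ^ p := by
          rw [← ENNReal.rpow_add _ _ hgy0 hgy]
          norm_num
        have hle : g y ^ (1 - p) ≤ s ^ (1 - p) := by
          have e1 : g y ^ (1 - p) = (g y ^ (p - 1))⁻¹ := by
            rw [← ENNReal.rpow_neg, neg_sub]
          have e2 : s ^ (1 - p) = (s ^ (p - 1))⁻¹ := by
            rw [← ENNReal.rpow_neg, neg_sub]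
          rw [e1, e2]
          exact ENNReal.inv_le_inv.2 (ENNReal.rpow_le_rpow hy.le hp1.le)
        calc g y = g y ^ (1 - p) * g y ^ p := hsplit
          _ ≤ s ^ (1 - p) * g y ^ p := mul_le_mul_left hle _
    have hfin : s ^ (1 - p) ≠ ∞ := by
      simp [ENNReal.rpow_eq_top_iff, hs0, hst]
    calc ν {y : Eu | s < g y} = ∫⁻ y in {y : Eu | s < g y}, g y := by
          rw [hν, withDensity_apply _ hset]
      _ ≤ ∫⁻ y in {y : Eu | s < g y}, s ^ (1 - p) * g y ^ p :=
          setLIntegral_mono (((hg.pow_const p).const_mul _)) hpt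
      _ = s ^ (1 - p) * ∫⁻ y in {y : Eu | s < g y}, g y ^ p :=
          lintegral_const_mul' _ _ hfin
      _ ≤ s ^ (1 - p) * Ip :=
          mul_le_mul_right (lintegral_mono' Measure.restrict_le_self le_rfl) _
  -- a.e. finiteness of the maximal function
  set A := ENNReal.ofReal (4 ^ n) * Ip with hA
  have hAtop : A ≠ ∞ := ENNReal.mul_ne_top ENNReal.ofReal_ne_top hItop
  have hFfin : volume {x : Eu | Mx n g x = ∞} = 0 := by
    have hbound : ∀ k : ℕ, volume {x : Eu | Mx n g x = ∞} ≤ A * ((k:ℝ≥0∞) + 1)⁻¹ := by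
      intro k
      have htk : (0:ℝ) < 2 * ((k:ℝ) + 1) := by positivity
      have hsval : ENNReal.ofReal ((2 * ((k:ℝ) + 1)) / 2) = (k:ℝ≥0∞) + 1 := by
        rw [mul_div_cancel_left₀ _ (by norm_num : (2:ℝ) ≠ 0)]
        rw [ENNReal.ofReal_add (by positivity) zero_le_one]
        simp [ENNReal.ofReal_natCast]
      have hsub : {x : Eu | Mx n g x = ∞} ⊆
          {x : Eu | ENNReal.ofReal (2 * ((k:ℝ) + 1)) < Mx n g x} := by
        intro x hx
        rw [mem_setOf_eq] at hx ⊢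
        rw [hx]; exact ENNReal.ofReal_lt_top
      have hs0 : ((k:ℝ≥0∞) + 1) ≠ 0 := (lt_of_lt_of_le zero_lt_one le_add_self).ne'
      have hst : ((k:ℝ≥0∞) + 1) ≠ ∞ := by
        simp [ENNReal.add_eq_top]
      have h1le : (1:ℝ≥0∞) ≤ (k:ℝ≥0∞) + 1 := le_add_self
      calc volume {x : Eu | Mx n g x = ∞}
          ≤ volume {x : Eu | ENNReal.ofReal (2 * ((k:ℝ) + 1)) < Mx n g x} :=
            measure_mono hsub
        _ ≤ ENNReal.ofReal (4 ^ n) * (ENNReal.ofReal ((2 * ((k:ℝ) + 1)) / 2))⁻¹ *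
              ν {y : Eu | ENNReal.ofReal ((2 * ((k:ℝ) + 1)) / 2) < g y} := distrib _ htk
        _ = ENNReal.ofReal (4 ^ n) * ((k:ℝ≥0∞) + 1)⁻¹ *
              ν {y : Eu | ((k:ℝ≥0∞) + 1) < g y} := by rw [hsval]
        _ ≤ ENNReal.ofReal (4 ^ n) * ((k:ℝ≥0∞) + 1)⁻¹ * (((k:ℝ≥0∞) + 1) ^ (1 - p) * Ip) :=
            mul_le_mul_right (nubound _ hs0 hst) _
        _ ≤ ENNReal.ofReal (4 ^ n) * ((k:ℝ≥0∞) + 1)⁻¹ * (1 * Ip) := by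
            gcongr
            exact ENNReal.rpow_le_one_of_one_le_of_neg h1le (by linarith)
        _ = A * ((k:ℝ≥0∞) + 1)⁻¹ := by rw [hA]; ring
    by_contra hv
    have hvtop : volume {x : Eu | Mx n g x = ∞} ≠ ∞ := by
      intro hcon
      have h0 := hbound 0
      rw [hcon] at h0
      simp only [Nat.cast_zero, zero_add, inv_one, mul_one, top_le_iff] at h0
      exact hAtop h0
    obtain ⟨k, hk⟩ := ENNReal.exists_nat_gt (ENNReal.div_lt_top hAtop hv).ne
    have h1 : A < (k:ℝ≥0∞) * volume {x : Eu | Mx n g x = ∞} := by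
      rwa [ENNReal.div_lt_iff (Or.inl hv) (Or.inl hvtop)] at hk
    have h2 : (k:ℝ≥0∞) * volume {x : Eu | Mx n g x = ∞} ≤ A := by
      calc (k:ℝ≥0∞) * volume {x : Eu | Mx n g x = ∞}
          ≤ ((k:ℝ≥0∞) + 1) * (A * ((k:ℝ≥0∞) + 1)⁻¹) :=
            mul_le_mul' le_self_add (hbound k)
        _ = A * (((k:ℝ≥0∞) + 1)⁻¹ * ((k:ℝ≥0∞) + 1)) := by ring
        _ = A := by
            rw [ENNReal.inv_mul_cancel (lt_of_lt_of_le zero_lt_one le_add_self).ne' (by simp [ENNReal.add_eq_top]), mul_one]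
    exact absurd (lt_of_lt_of_le h1 h2) (lt_irrefl _)
  -- layer cake
  have hFm : Measurable (Mx n g) := measurable_Mx g
  have hFae : ∀ᵐ x : Eu ∂volume, Mx n g x ≠ ∞ := by
    rw [ae_iff]
    have hset : {x : Eu | ¬ Mx n g x ≠ ∞} = {x : Eu | Mx n g x = ∞} := by
      ext x; simp [not_not]
    rw [hset]; exact hFfin
  have congr1 : ∫⁻ x, Mx n g x ^ p = ∫⁻ x, ENNReal.ofReal ((Mx n g x).toReal ^ p) := by
    apply lintegral_congr_ae
    filter_upwards [hFae] with x hx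
    conv_lhs => rw [← ENNReal.ofReal_toReal hx]
    exact ENNReal.ofReal_rpow_of_nonneg ENNReal.toReal_nonneg hp0.le
  have lc1 := lintegral_rpow_eq_lintegral_meas_lt_mul volume
      (f := fun x => (Mx n g x).toReal) (ae_of_all _ fun x => ENNReal.toReal_nonneg)
      (hFm.ennreal_toReal.aemeasurable) hp0
  set T := ∫⁻ t in Ioi (0:ℝ), ν {a : Eu | t < h a} * ENNReal.ofReal (t ^ (p - 2)) with hT
  have inner : ∀ t : ℝ, 0 < t →
      volume {a : Eu | t < (Mx n g a).toReal} * ENNReal.ofReal (t ^ (p - 1)) ≤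
        ENNReal.ofReal (4 ^ n) * 2 * (ν {a : Eu | t < h a} * ENNReal.ofReal (t ^ (p - 2))) := by
    intro t ht
    have step1 : volume {a : Eu | t < (Mx n g a).toReal} ≤
        volume {x : Eu | ENNReal.ofReal t < Mx n g x} := by
      apply measure_mono
      intro a ha
      rw [mem_setOf_eq] at ha ⊢
      rcases eq_or_ne (Mx n g a) ∞ with hFa | hFa
      · rw [hFa]; exact ENNReal.ofReal_lt_top
      · rw [← ENNReal.ofReal_toReal hFa]
        exact (ENNReal.ofReal_lt_ofReal_iff (lt_trans ht ha)).2 ha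
    have step2 : ν {y : Eu | ENNReal.ofReal (t/2) < g y} ≤ ν {a : Eu | t < h a} := by
      have hsub : {y : Eu | ENNReal.ofReal (t/2) < g y} ⊆
          {a : Eu | t < h a} ∪ {y : Eu | g y = ∞} := by
        intro y hy
        rw [mem_setOf_eq] at hy
        rcases eq_or_ne (g y) ∞ with hgy | hgy
        · exact Or.inr hgy
        · left
          show t < 2 * (g y).toReal
          rw [← ENNReal.ofReal_toReal hgy] at hy
          have hlt := (ENNReal.ofReal_lt_ofReal_iff_of_nonneg (by positivity)).1 hy
          linarith
      calc ν {y : Eu | ENNReal.ofReal (t/2) < g y}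
          ≤ ν ({a : Eu | t < h a} ∪ {y : Eu | g y = ∞}) := measure_mono hsub
        _ ≤ ν {a : Eu | t < h a} + ν {y : Eu | g y = ∞} := measure_union_le _ _
        _ = ν {a : Eu | t < h a} := by rw [hνinf, add_zero]
    have hcoef : (ENNReal.ofReal (t/2))⁻¹ * ENNReal.ofReal (t ^ (p-1)) =
        2 * ENNReal.ofReal (t ^ (p-2)) := by
      rw [← ENNReal.ofReal_inv_of_pos (by positivity), ← ENNReal.ofReal_mul (by positivity)]
      have h22 : (2:ℝ≥0∞) = ENNReal.ofReal 2 := by simp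
      rw [h22, ← ENNReal.ofReal_mul (by norm_num)]
      congr 1
      have h1 : t ^ (p-1) = t ^ (p-2) * t := by
        rw [← Real.rpow_add_one ht.ne' (p-2)]
        congr 1
        ring
      rw [h1]
      field_simp
    calc volume {a : Eu | t < (Mx n g a).toReal} * ENNReal.ofReal (t ^ (p-1))
        ≤ (ENNReal.ofReal (4^n) * (ENNReal.ofReal (t/2))⁻¹ *
            ν {y : Eu | ENNReal.ofReal (t/2) < g y}) * ENNReal.ofReal (t ^ (p-1)) :=
          mul_le_mul' (step1.trans (distrib t ht)) le_rfl
      _ ≤ (ENNReal.ofReal (4^n) * (ENNReal.ofReal (t/2))⁻¹ *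
            ν {a : Eu | t < h a}) * ENNReal.ofReal (t ^ (p-1)) := by gcongr
      _ = ENNReal.ofReal (4^n) * ν {a : Eu | t < h a} *
            ((ENNReal.ofReal (t/2))⁻¹ * ENNReal.ofReal (t ^ (p-1))) := by ring
      _ = ENNReal.ofReal (4^n) * ν {a : Eu | t < h a} * (2 * ENNReal.ofReal (t ^ (p-2))) := by
          rw [hcoef]
      _ = ENNReal.ofReal (4^n) * 2 * (ν {a : Eu | t < h a} * ENNReal.ofReal (t ^ (p-2))) := by
          ring
  have lc2 := lintegral_rpow_eq_lintegral_meas_lt_mul ν (f := h)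
      (ae_of_all _ fun y => by positivity) hhm.aemeasurable hp1
  have hexp : p - 1 - 1 = p - 2 := by ring
  rw [hexp] at lc2
  have hc0 : ENNReal.ofReal (p-1) ≠ 0 := by
    simp only [ne_eq, ENNReal.ofReal_eq_zero, not_le]; linarith
  have hTval : T = (ENNReal.ofReal (p-1))⁻¹ * ∫⁻ y, ENNReal.ofReal (h y ^ (p-1)) ∂ν := by
    rw [hT, lc2, ← mul_assoc, ENNReal.inv_mul_cancel hc0 ENNReal.ofReal_ne_top, one_mul]
  have hgm2 : Measurable fun y : Eu => ENNReal.ofReal (h y ^ (p-1)) :=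
    (ENNReal.measurable_ofReal.comp
      ((Real.continuous_rpow_const hp1.le).measurable.comp hhm))
  have hInth : ∫⁻ y, ENNReal.ofReal (h y ^ (p-1)) ∂ν ≤ ENNReal.ofReal (2 ^ (p-1)) * Ip := by
    rw [hν, lintegral_withDensity_eq_lintegral_mul volume hg hgm2]
    have hgae : ∀ᵐ y : Eu ∂volume, g y ≠ ∞ := by
      rw [ae_iff]
      have hs : {y : Eu | ¬ g y ≠ ∞} = {y : Eu | g y = ∞} := by ext y; simp [not_not]
      rw [hs]; exact hgfin
    have hptw : ∀ᵐ y : Eu ∂volume,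
        (g * fun y => ENNReal.ofReal (h y ^ (p-1))) y ≤ ENNReal.ofReal (2^(p-1)) * g y ^ p := by
      filter_upwards [hgae] with y hy
      simp only [Pi.mul_apply]
      rcases eq_or_ne (g y) 0 with h0 | h0
      · rw [h0]; simp
      · have e1 : h y ^ (p-1) = 2^(p-1) * (g y).toReal ^ (p-1) := by
          rw [hh]; exact Real.mul_rpow (by norm_num) ENNReal.toReal_nonneg
        have e2 : ENNReal.ofReal ((g y).toReal ^ (p-1)) = g y ^ (p-1) := by
          conv_rhs => rw [← ENNReal.ofReal_toReal hy]
          rw [ENNReal.ofReal_rpow_of_nonneg ENNReal.toReal_nonneg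
            (by linarith : (0:ℝ) ≤ p - 1)]
        rw [e1, ENNReal.ofReal_mul (by positivity), e2]
        refine le_of_eq ?_
        calc g y * (ENNReal.ofReal (2^(p-1)) * g y ^ (p-1))
            = ENNReal.ofReal (2^(p-1)) * (g y * g y ^ (p-1)) := by ring
          _ = ENNReal.ofReal (2^(p-1)) * g y ^ p := by
              congr 1
              nth_rewrite 1 [← ENNReal.rpow_one (g y)]
              rw [← ENNReal.rpow_add _ _ h0 hy]
              norm_num
    calc ∫⁻ y, (g * fun y => ENNReal.ofReal (h y ^ (p-1))) y ∂volume
        ≤ ∫⁻ y, ENNReal.ofReal (2^(p-1)) * g y ^ p ∂volume := lintegral_mono_ae hptw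
      _ = ENNReal.ofReal (2^(p-1)) * Ip := lintegral_const_mul' _ _ ENNReal.ofReal_ne_top
  calc ∫⁻ x, Mx n g x ^ p
      = ENNReal.ofReal p * ∫⁻ t in Ioi (0:ℝ),
          volume {a : Eu | t < (Mx n g a).toReal} * ENNReal.ofReal (t ^ (p-1)) := by
        rw [congr1, lc1]
    _ ≤ ENNReal.ofReal p * ∫⁻ t in Ioi (0:ℝ),
          ENNReal.ofReal (4^n) * 2 * (ν {a : Eu | t < h a} * ENNReal.ofReal (t ^ (p-2))) := by
        apply mul_le_mul_right
        apply lintegral_mono_ae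
        filter_upwards [ae_restrict_mem measurableSet_Ioi] with t ht
        exact inner t ht
    _ = ENNReal.ofReal p * (ENNReal.ofReal (4^n) * 2 * T) := by
        rw [hT, lintegral_const_mul' _ _ (ENNReal.mul_ne_top ENNReal.ofReal_ne_top
          (by norm_num))]
    _ = ENNReal.ofReal p * (ENNReal.ofReal (4^n) * 2 *
          ((ENNReal.ofReal (p-1))⁻¹ * ∫⁻ y, ENNReal.ofReal (h y ^ (p-1)) ∂ν)) := by
        rw [hTval]
    _ ≤ ENNReal.ofReal p * (ENNReal.ofReal (4^n) * 2 *
          ((ENNReal.ofReal (p-1))⁻¹ * (ENNReal.ofReal (2^(p-1)) * Ip))) := by gcongr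
    _ = Cs n p * Ip := by unfold Cs; ring


end Stmt16Aux

open Stmt16Aux

/-- `M_α` is bounded from `L^p(ℝⁿ)` to `L^q(ℝⁿ)` for
`0 < α < n`, `1 < p < n/α` and `1/q = 1/p - α/n`. -/
theorem stmt16 (n : ℕ) (hn : 1 ≤ n) (α : ℝ) (hα0 : 0 < α) (hαn : α < n)
    (p q : ℝ) (hp1 : 1 < p) (hp2 : p < n / α) (hq : 1 / q = 1 / p - α / n) :
    ∃ C : ℝ, 0 ≤ C ∧
      ∀ f : EuclideanSpace ℝ (Fin n) → ℝ, MemLp f (ENNReal.ofReal p) volume →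
        (∫⁻ x, fracMax n α f x ^ q) ^ (1 / q) ≤
          ENNReal.ofReal C * eLpNorm f (ENNReal.ofReal p) volume := by
  have hn' : n ≠ 0 := Nat.one_le_iff_ne_zero.1 hn
  have hnR : (0:ℝ) < n := by exact_mod_cast Nat.pos_of_ne_zero hn'
  have hp0 : (0:ℝ) < p := lt_trans one_pos hp1
  have han : 0 < α / n := div_pos hα0 hnR
  have hinvq : 0 < 1 / q := by
    rw [hq]
    have h1 : p * α < n := (lt_div_iff₀ hα0).1 hp2
    rw [sub_pos, div_lt_div_iff₀ hnR hp0]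
    linarith
  have hq0 : (0:ℝ) < q := by
    by_contra hcon
    push_neg at hcon
    have : 1 / q ≤ 0 := div_nonpos_of_nonneg_of_nonpos zero_le_one hcon
    linarith
  have hpq : p < q := by
    have h2 : 1 / q < 1 / p := by
      rw [hq]; linarith
    rw [div_lt_div_iff₀ hq0 hp0] at h2
    linarith
  set θ : ℝ := p / q with hθ
  have hθ0 : 0 < θ := div_pos hp0 hq0
  have hθ1 : θ < 1 := (div_lt_one hq0).2 hpq
  have hco : 1 - θ = p * (α / n) := by
    have : θ = p * (1 / q) := by rw [hθ, div_eq_mul_one_div]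
    rw [this, hq]
    have : p * (1/p) = 1 := by field_simp
    rw [mul_sub, this]
    ring
  have hCsT : Cs n p ^ (1/q) ≠ ∞ :=
    ENNReal.rpow_ne_top_of_nonneg (le_of_lt hinvq) (Cs_ne_top hp1)
  refine ⟨(Cs n p ^ (1/q)).toReal, ENNReal.toReal_nonneg, ?_⟩
  intro f hf
  set g : EuclideanSpace ℝ (Fin n) → ℝ≥0∞ := fun y => (‖f y‖₊ : ℝ≥0∞) with hg
  set N := eLpNorm f (ENNReal.ofReal p) volume with hN
  have hofp0 : ENNReal.ofReal p ≠ 0 := by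
    simp only [ne_eq, ENNReal.ofReal_eq_zero, not_le]; exact hp0
  have hofp : (ENNReal.ofReal p).toReal = p := ENNReal.toReal_ofReal hp0.le
  have hNtop : N ≠ ∞ := hf.2.ne
  have hNform : N = (∫⁻ y, g y ^ p) ^ (1/p) := by
    rw [hN, eLpNorm_eq_lintegral_rpow_enorm_toReal hofp0 ENNReal.ofReal_ne_top, hofp]; rfl
  have hNp : ∫⁻ y, g y ^ p = N ^ p := by
    rw [hNform, ← ENNReal.rpow_mul, one_div_mul_cancel hp0.ne', ENNReal.rpow_one]
  rcases eq_or_ne N 0 with hN0 | hN0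
  · -- f vanishes a.e.
    have hfz : f =ᵐ[volume] 0 := (eLpNorm_eq_zero_iff hf.1 hofp0).1 hN0
    have hgz : g =ᵐ[volume] 0 := by
      filter_upwards [hfz] with y hy
      simp [hg, hy]
    have hfm : ∀ x, fracMax n α f x = 0 := by
      intro x
      have hrfl : fracMax n α f x = ⨆ (c : EuclideanSpace ℝ (Fin n)) (r : ℝ) (_ : 0 < r)
          (_ : x ∈ ball c r), volume (ball c r) ^ (α / n - 1) * ∫⁻ y in ball c r, g y := rfl
      rw [hrfl]
      simp only [ENNReal.iSup_eq_zero]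
      intro c r hr hx
      have hz : ∫⁻ y in ball c r, g y = 0 := by
        rw [lintegral_congr_ae (ae_restrict_of_ae hgz)]
        simp
      rw [hz, mul_zero]
    have : (∫⁻ x, fracMax n α f x ^ q) = 0 := by
      simp only [hfm, ENNReal.zero_rpow_of_pos hq0, lintegral_zero]
    rw [this, ENNReal.zero_rpow_of_pos hinvq]
    exact zero_le
  -- Hölder estimate on balls
  have hpq' : p.HolderConjugate (p / (p-1)) := Real.HolderConjugate.conjExponent hp1
  have hinvp' : 1 / (p / (p-1)) = 1 - 1/p := by
    have h3 := hpq'.inv_add_inv_eq_inv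
    rw [inv_one] at h3
    rw [one_div, one_div]
    linarith
  have holder : ∀ (c : EuclideanSpace ℝ (Fin n)) (r : ℝ), 0 < r →
      ∫⁻ y in ball c r, g y ≤ N * volume (ball c r) ^ (1 - 1/p) := by
    intro c r hr
    have hgae : AEMeasurable g (volume.restrict (ball c r)) :=
      hf.1.enorm.restrict
    have hH := ENNReal.lintegral_mul_le_Lp_mul_Lq (volume.restrict (ball c r)) hpq' hgae
      (aemeasurable_const (b := (1:ℝ≥0∞)))
    simp only [Pi.mul_apply, mul_one, ENNReal.one_rpow, lintegral_const, one_mul,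
      Measure.restrict_apply_univ] at hH
    rw [hinvp'] at hH
    refine hH.trans ?_
    gcongr
    rw [hNform]
    gcongr
    exact Measure.restrict_le_self
  -- pointwise bound
  have ptwise : ∀ x, fracMax n α f x ≤ Mx n g x ^ θ * N ^ (1-θ) := by
    intro x
    have hrfl : fracMax n α f x = ⨆ (c : EuclideanSpace ℝ (Fin n)) (r : ℝ) (_ : 0 < r)
        (_ : x ∈ ball c r), volume (ball c r) ^ (α / n - 1) * ∫⁻ y in ball c r, g y := rfl
    rw [hrfl]
    apply iSup_le; intro c; apply iSup_le; intro r; apply iSup_le; intro hr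
    apply iSup_le; intro hx
    set V := volume (ball c r) with hV
    set J := ∫⁻ y in ball c r, g y with hJ
    have hV0 : V ≠ 0 := (measure_ball_pos volume c hr).ne'
    have hVt : V ≠ ∞ := measure_ball_lt_top.ne
    have hple : (0:ℝ) ≤ 1 - 1/p := by
      have : 1/p ≤ 1 := by rw [div_le_one hp0]; linarith
      linarith
    rcases eq_or_ne J 0 with hJ0 | hJ0
    · rw [hJ0, mul_zero]
      exact zero_le
    have hJt : J ≠ ∞ := by
      refine ne_top_of_le_ne_top ?_ (holder c r hr)
      exact ENNReal.mul_ne_top hNtop (ENNReal.rpow_ne_top_of_nonneg hple hVt)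
    -- exponent identity
    have hexp : α / (n:ℝ) - 1 + (1 - 1/p) * (1-θ) = -θ := by
      have h1 : (1 - 1/p) * (1-θ) = (1-θ) - (1-θ)/p := by ring
      have h2 : (1-θ)/p = α / n := by
        rw [hco, mul_comm]
        exact mul_div_cancel_right₀ _ hp0.ne'
      rw [h1, h2]; ring
    have key : V ^ (α / (n:ℝ) - 1) * J ≤ (V⁻¹ * J) ^ θ * N ^ (1-θ) := by
      have hsplit : J = J ^ θ * J ^ (1-θ) := by
        rw [← ENNReal.rpow_add _ _ hJ0 hJt]
        norm_num
      calc V ^ (α / (n:ℝ) - 1) * J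
          = V ^ (α / (n:ℝ) - 1) * (J ^ θ * J ^ (1-θ)) := by rw [← hsplit]
        _ ≤ V ^ (α / (n:ℝ) - 1) * (J ^ θ * (N * V ^ (1 - 1/p)) ^ (1-θ)) := by
            have hb := ENNReal.rpow_le_rpow (holder c r hr) (by linarith : (0:ℝ) ≤ 1-θ)
            exact mul_le_mul_right (mul_le_mul_right hb _) _
        _ = J ^ θ * N ^ (1-θ) * (V ^ (α / (n:ℝ) - 1) * V ^ ((1 - 1/p) * (1-θ))) := by
            rw [ENNReal.mul_rpow_of_nonneg _ _ (by linarith : (0:ℝ) ≤ 1-θ),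
              ENNReal.rpow_mul V (1 - 1/p) (1-θ)]
            ring
        _ = J ^ θ * N ^ (1-θ) * V ^ (-θ) := by
            rw [← ENNReal.rpow_add _ _ hV0 hVt, hexp]
        _ = (V⁻¹ * J) ^ θ * N ^ (1-θ) := by
            rw [ENNReal.mul_rpow_of_nonneg _ _ hθ0.le, ENNReal.inv_rpow,
              ← ENNReal.rpow_neg]
            ring
    exact key.trans (mul_le_mul_left (ENNReal.rpow_le_rpow (term_le_Mx hr hx) hθ0.le) _)
  -- measurable version of g
  have hfm' := hf.1
  set f' := hfm'.mk f with hf'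
  have hg'meas : Measurable fun y => (‖f' y‖₊ : ℝ≥0∞) := hfm'.stronglyMeasurable_mk.enorm
  set g' : EuclideanSpace ℝ (Fin n) → ℝ≥0∞ := fun y => (‖f' y‖₊ : ℝ≥0∞) with hg'
  have hgg' : g =ᵐ[volume] g' := by
    filter_upwards [hfm'.ae_eq_mk] with y hy
    simp [hg, hg', hy, hf']
  have hMxeq : Mx n g = Mx n g' := Mx_congr_ae hgg'
  have hIpeq : ∫⁻ y, g' y ^ p = N ^ p := by
    rw [← hNp]
    apply lintegral_congr_ae
    filter_upwards [hgg'] with y hy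
    rw [hy]
  -- integrate
  have hNe1 : N ^ ((1-θ)*q) ≠ ∞ :=
    ENNReal.rpow_ne_top_of_nonneg (by nlinarith) hNtop
  have main : ∫⁻ x, fracMax n α f x ^ q ≤ N ^ ((1-θ)*q) * (Cs n p * N ^ p) := by
    calc ∫⁻ x, fracMax n α f x ^ q
        ≤ ∫⁻ x, (Mx n g x ^ θ * N ^ (1-θ)) ^ q := by
          apply lintegral_mono
          intro x
          exact ENNReal.rpow_le_rpow (ptwise x) hq0.le
      _ = ∫⁻ x, N ^ ((1-θ)*q) * Mx n g x ^ p := by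
          apply lintegral_congr
          intro x
          rw [ENNReal.mul_rpow_of_nonneg _ _ hq0.le, ← ENNReal.rpow_mul,
            ← ENNReal.rpow_mul]
          have : θ * q = p := by
            rw [hθ]; field_simp
          rw [this, mul_comm]
      _ = N ^ ((1-θ)*q) * ∫⁻ x, Mx n g x ^ p := lintegral_const_mul' _ _ hNe1
      _ = N ^ ((1-θ)*q) * ∫⁻ x, Mx n g' x ^ p := by rw [hMxeq]
      _ ≤ N ^ ((1-θ)*q) * (Cs n p * ∫⁻ x, g' x ^ p) :=
          mul_le_mul_right (strong hn' hp1 g' hg'meas) _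
      _ = N ^ ((1-θ)*q) * (Cs n p * N ^ p) := by rw [hIpeq]
  calc (∫⁻ x, fracMax n α f x ^ q) ^ (1/q)
      ≤ (N ^ ((1-θ)*q) * (Cs n p * N ^ p)) ^ (1/q) :=
        ENNReal.rpow_le_rpow main hinvq.le
    _ = Cs n p ^ (1/q) * N := by
        rw [ENNReal.mul_rpow_of_nonneg _ _ hinvq.le,
          ENNReal.mul_rpow_of_nonneg _ _ hinvq.le,
          ← ENNReal.rpow_mul, ← ENNReal.rpow_mul]
        have e1 : (1-θ)*q*(1/q) = 1-θ := by field_simp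
        have e2 : p * (1/q) = θ := by rw [hθ]; ring
        rw [e1, e2]
        have : N ^ (1-θ) * (Cs n p ^ (1/q) * N ^ θ) = Cs n p ^ (1/q) * (N ^ (1-θ) * N ^ θ) := by
          ring
        rw [this, ← ENNReal.rpow_add _ _ hN0 hNtop]
        norm_num
    _ = ENNReal.ofReal (Cs n p ^ (1/q)).toReal * N := by
        rw [ENNReal.ofReal_toReal hCsT]
end
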